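/- arXiv:1204.2710 — 9 statements merged into one kernel-verified Lean document; each statement's English description precedes it below -/
import Mathlib

section
/- Let C be a k-dimensional linear code over a finite field F_q with q elements, and suppose C is a constant weight code of weight d (every nonzero codeword has weight d). Then the weight hierarchy of C is given by q^{i−1}(q−1) · d_i = d · (q^i − 1) for every 1 ≤ i ≤ k, i.e. d_i = d (q^i − 1)/(q^{i−1}(q−1)). -/
/-!
Double count the pairs `(c, x)` with `c` in an `i`-dimensional subcode `D` and `c x ≠ 0`.
Each nonzero codeword lies in `d` such pairs. For `x` in the support of `D`, evaluation at `x`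
is a nonzero functional on `D`, so exactly `q ^ i - q ^ (i - 1) = q ^ (i - 1) * (q - 1)`
codewords avoid its kernel. Hence `q ^ (i - 1) * (q - 1) * w(D) = d * (q ^ i - 1)` for *every*
`i`-dimensional subcode `D`, in particular for one of minimal weight.
-/

/-- The support of a subcode `D` of `F_q^n`. -/
def codeSupp {F : Type*} [Field F] {n : ℕ} (D : Submodule F (Fin n → F)) : Set (Fin n) :=
  {x | ∃ d ∈ D, d x ≠ 0}

/-- The weight of a subcode: the cardinality of its support. -/
noncomputable def codeWt {F : Type*} [Field F] {n : ℕ} (D : Submodule F (Fin n → F)) : ℕ :=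
  (codeSupp D).ncard

/-- The `i`-th generalized Hamming weight of a code `C`:
the minimal weight of an `i`-dimensional subcode of `C`. -/
noncomputable def dGHW {F : Type*} [Field F] {n : ℕ} (C : Submodule F (Fin n → F)) (i : ℕ) : ℕ :=
  sInf {m | ∃ D : Submodule F (Fin n → F), D ≤ C ∧ Module.finrank F D = i ∧ codeWt D = m}

open Finset Module

theorem Submodule.exists_le_finrank_eq {K V : Type*} [DivisionRing K] [AddCommGroup V]
    [Module K V] (C : Submodule K V) {i : ℕ} (hi : i ≤ finrank K C) :
    ∃ D ≤ C, finrank K D = i := by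
  obtain ⟨b, hb⟩ := exists_linearIndependent_of_le_finrank hi
  refine ⟨(Submodule.span K (Set.range b)).map C.subtype, Submodule.map_subtype_le _ _, ?_⟩
  rw [Submodule.finrank_map_subtype_eq, finrank_span_eq_card hb, Fintype.card_fin]

theorem ncard_setOf_apply_ne_zero_eq_hammingNorm {ι M : Type*} [Fintype ι] [Zero M]
    [DecidableEq M] (c : ι → M) :
    {x | c x ≠ 0}.ncard = hammingNorm c := by
  rw [Set.ncard_eq_toFinset_card', Set.toFinset_ofPred]
  rfl

section

variable {F : Type*} [Field F] {n : ℕ}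

theorem mem_codeSupp_iff {D : Submodule F (Fin n → F)} {x : Fin n} :
    x ∈ codeSupp D ↔ (LinearMap.proj x ∘ₗ D.subtype : Dual F D) ≠ 0 := by
  simp [codeSupp, LinearMap.ext_iff]

theorem exists_le_finrank_eq_codeWt_eq_dGHW {C : Submodule F (Fin n → F)} {i : ℕ}
    (hi : i ≤ finrank F C) : ∃ D ≤ C, finrank F D = i ∧ codeWt D = dGHW C i := by
  obtain ⟨D, hDC, hDi⟩ := C.exists_le_finrank_eq hi
  exact Nat.sInf_mem (s := {m | ∃ D ≤ C, finrank F D = i ∧ codeWt D = m})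
    ⟨_, D, hDC, hDi, rfl⟩

variable [Fintype F]

theorem Module.Dual.card_apply_ne_zero {V : Type*} [AddCommGroup V] [Module F V] [Fintype V]
    [DecidableEq F] {f : Dual F V} (hf : f ≠ 0) :
    Fintype.card {v // f v ≠ 0}
      = Fintype.card F ^ (finrank F V - 1) * (Fintype.card F - 1) := by
  classical
  obtain ⟨r, hr⟩ : ∃ r, finrank F (LinearMap.ker f) = r := ⟨_, rfl⟩
  have hV : finrank F V = r + 1 := hr ▸ (Dual.finrank_ker_add_one_of_ne_zero hf).symm
  have hker : Fintype.card {v // f v = 0} = Fintype.card F ^ r := by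
    rw [← hr, ← card_eq_pow_finrank (K := F) (V := LinearMap.ker f)]
    exact Fintype.card_congr (Equiv.subtypeEquivRight fun v => LinearMap.mem_ker.symm)
  rw [Fintype.card_subtype_compl, hker, card_eq_pow_finrank (K := F) (V := V), hV,
    Nat.add_sub_cancel, pow_succ, Nat.mul_sub_one]

theorem sum_hammingNorm_of_forall_hammingNorm_eq {ι : Type*} [Fintype ι] [DecidableEq F]
    {D : Submodule F (ι → F)} [Fintype D] {d : ℕ} (hD : ∀ c ∈ D, c ≠ 0 → hammingNorm c = d) :
    ∑ c : D, hammingNorm (c : ι → F) = (Fintype.card F ^ finrank F D - 1) * d := by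
  rw [← sum_erase univ (a := 0) (by simp), sum_congr rfl fun (c : D) hc => hD c c.2 ?_,
    sum_const, card_erase_of_mem (mem_univ 0), card_univ, card_eq_pow_finrank (K := F) (V := D),
    smul_eq_mul]
  exact (Submodule.coe_eq_zero).not.2 (ne_of_mem_erase hc)

theorem card_filter_apply_ne_zero_of_mem_codeSupp [DecidableEq F] {D : Submodule F (Fin n → F)}
    [Fintype D] {x : Fin n} (hx : x ∈ codeSupp D) :
    #{c : D | (c : Fin n → F) x ≠ 0}
      = Fintype.card F ^ (finrank F D - 1) * (Fintype.card F - 1) := by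
  rw [← Dual.card_apply_ne_zero (mem_codeSupp_iff.1 hx), Fintype.card_subtype]
  rfl

theorem sum_hammingNorm_eq_codeWt_mul [DecidableEq F] (D : Submodule F (Fin n → F))
    [Fintype D] :
    ∑ c : D, hammingNorm (c : Fin n → F)
      = codeWt D * (Fintype.card F ^ (finrank F D - 1) * (Fintype.card F - 1)) := by
  classical
  calc ∑ c : D, hammingNorm (c : Fin n → F)
      = ∑ x, #{c : D | (c : Fin n → F) x ≠ 0} := by
        simp only [hammingNorm, card_filter]
        exact sum_comm
    _ = ∑ x ∈ (codeSupp D).toFinset, #{c : D | (c : Fin n → F) x ≠ 0} := by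
        refine (sum_subset (subset_univ _) fun x _ hx => ?_).symm
        rw [card_eq_zero, filter_eq_empty_iff]
        exact fun c _ hc => (Set.mem_toFinset.not.1 hx) ⟨c, c.2, hc⟩
    _ = _ := by
        rw [sum_const_nat fun x hx => card_filter_apply_ne_zero_of_mem_codeSupp
          (Set.mem_toFinset.1 hx), codeWt, Set.ncard_eq_toFinset_card']

theorem mul_codeWt_eq_of_forall_hammingNorm_eq [DecidableEq F] {D : Submodule F (Fin n → F)}
    {d : ℕ} (hD : ∀ c ∈ D, c ≠ 0 → hammingNorm c = d) :
    Fintype.card F ^ (finrank F D - 1) * (Fintype.card F - 1) * codeWt D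
      = d * (Fintype.card F ^ finrank F D - 1) := by
  classical
  rw [mul_comm, ← sum_hammingNorm_eq_codeWt_mul, sum_hammingNorm_of_forall_hammingNorm_eq hD,
    mul_comm]

end

/-- If `C` is a constant weight code of weight `d`, then its weight hierarchy satisfies
`q^(i-1) * (q-1) * d_i = d * (q^i - 1)` for all `1 ≤ i ≤ k`. -/
theorem weight_hierarchy_of_constant_weight
    {F : Type*} [Field F] [Fintype F] {n k q d : ℕ} (hq : Fintype.card F = q)
    (C : Submodule F (Fin n → F)) (hk : Module.finrank F C = k)
    (hconst : ∀ c ∈ C, c ≠ 0 → ({x | c x ≠ 0} : Set (Fin n)).ncard = d) :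
    ∀ i, 1 ≤ i → i ≤ k →
      q ^ (i - 1) * (q - 1) * dGHW C i = d * (q ^ i - 1) := by
  classical
  intro i _ hik
  subst hq hk
  obtain ⟨D, hDC, rfl, hwt⟩ := exists_le_finrank_eq_codeWt_eq_dGHW hik
  rw [← hwt]
  refine mul_codeWt_eq_of_forall_hammingNorm_eq fun c hc hc0 => ?_
  rw [← ncard_setOf_apply_ne_zero_eq_hammingNorm]
  exact hconst c (hDC hc) hc0
end

section
/- Let C be a k-dimensional linear code over a finite field F_q with q elements, and suppose that for some 1 ≤ i < k the generalized Hamming weights satisfy q^{k−i}(q^i − 1) · d_k = (q^k − 1) · d_i. Then C is a constant weight code, of weight d where d · (q^k − 1) = d_k · q^{k−1}(q − 1). -/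
/-!
Double counting over the `i`-dimensional subcodes `E ≤ C`, with `[m, j]` the number of
`j`-dimensional subspaces of `F^m`. Each coordinate `x` in the support of `C` cuts out a hyperplane
`H_x` of `C`, and `x ∈ Supp(E)` iff `E ≰ H_x`. Exactly `q^(k-i) [k-1, i-1]` of the `i`-subspaces of
`C` are not contained in a given hyperplane, so `∑_E w(E) = d_k q^(k-i) [k-1, i-1]`. There are
`[k, i] = (q^k - 1) / (q^i - 1) [k-1, i-1]` terms, each at least `d_i`, and the hypothesis says
exactly that this lower bound is attained: every `i`-dimensional subcode has weight `d_i`.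
Counting in the same way over the `i`-subcodes through a fixed nonzero codeword `c` gives
`[k-1, i-1] d_i + (d_k - w(c)) [k-2, i-1] = d_k [k-1, i-1]`, which determines `w(c)`. Its value
follows from `∑_c w(c) = d_k (q^k - q^(k-1))`.
-/

open Module Finset
open scoped Classical

/-- The Gaussian binomial coefficient `[m, j]_q` for `q = |F|`, counted directly. -/
noncomputable def numSubspaces (F : Type*) [Field F] (m j : ℕ) : ℕ :=
  Nat.card {E : Submodule F (Fin m → F) // finrank F E = j}

section Subspaces

variable {F W : Type*} [Field F] [AddCommGroup W] [Module F W]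

theorem numSubspaces_pos [Finite F] {m j : ℕ} (h : j ≤ m) : 0 < numSubspaces F m j := by
  obtain ⟨f, hf⟩ := exists_linearIndependent_of_le_finrank (h.trans_eq (finrank_fin_fun F).symm)
  exact Nat.card_pos_iff.2
    ⟨⟨⟨Submodule.span F (Set.range f), by rw [finrank_span_eq_card hf, Fintype.card_fin]⟩⟩,
      inferInstance⟩

theorem card_submodule_finrank_eq [FiniteDimensional F W] (j : ℕ) :
    Nat.card {E : Submodule F W // finrank F E = j} = numSubspaces F (finrank F W) j :=
  let e := LinearEquiv.ofFinrankEq W (Fin (finrank F W) → F) (finrank_fin_fun F).symm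
  Nat.card_congr <| (Submodule.orderIsoMapComap e).toEquiv.subtypeEquiv fun E => by
    rw [← e.finrank_map_eq E]; rfl

theorem card_submodule_le_and (A : Submodule F W) (P : Submodule F W → Prop) :
    Nat.card {E : Submodule F W // E ≤ A ∧ P E} =
      Nat.card {E : Submodule F A // P (E.map A.subtype)} :=
  Nat.card_congr <| (Equiv.subtypeSubtypeEquivSubtypeInter (· ≤ A) P).symm.trans
    ((Submodule.MapSubtype.orderIso A).toEquiv.subtypeEquiv fun _ => Iff.rfl).symm

theorem card_submodule_ge_and (p : Submodule F W) (P : Submodule F W → Prop) :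
    Nat.card {E : Submodule F W // p ≤ E ∧ P E} =
      Nat.card {E : Submodule F (W ⧸ p) // P (E.comap p.mkQ)} :=
  Nat.card_congr <| (Equiv.subtypeSubtypeEquivSubtypeInter (p ≤ ·) P).symm.trans
    ((Submodule.comapMkQRelIso p).toEquiv.subtypeEquiv fun _ => Iff.rfl).symm

theorem card_submodule_le_finrank_eq [FiniteDimensional F W] (A : Submodule F W) (j : ℕ) :
    Nat.card {E : Submodule F W // E ≤ A ∧ finrank F E = j} = numSubspaces F (finrank F A) j := by
  simp only [card_submodule_le_and, Submodule.finrank_map_subtype_eq, card_submodule_finrank_eq]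

theorem finrank_comap_mkQ [FiniteDimensional F W] (p : Submodule F W) (E : Submodule F (W ⧸ p)) :
    finrank F (E.comap p.mkQ) = finrank F E + finrank F p := by
  have h := LinearMap.finrank_range_add_finrank_ker (p.mkQ.comp (E.comap p.mkQ).subtype)
  rwa [LinearMap.range_comp, Submodule.range_subtype,
    Submodule.map_comap_eq_of_surjective p.mkQ_surjective, LinearMap.ker_comp, Submodule.ker_mkQ,
    (Submodule.comapSubtypeEquivOfLe (Submodule.le_comap_mkQ p E)).finrank_eq, eq_comm] at h

theorem card_submodule_mem_finrank_eq [FiniteDimensional F W] {v : W} (hv : v ≠ 0) (j : ℕ) :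
    Nat.card {E : Submodule F W // v ∈ E ∧ finrank F E = j + 1} =
      numSubspaces F (finrank F W - 1) j := by
  have hspan : finrank F (Submodule.span F {v}) = 1 := finrank_span_singleton hv
  have hW := (Submodule.span F {v}).finrank_quotient_add_finrank
  simp only [← Submodule.span_singleton_le_iff_mem, card_submodule_ge_and, finrank_comap_mkQ, hspan,
    add_left_inj, card_submodule_finrank_eq]
  congr 1
  omega

theorem card_submodule_le_mem_finrank_eq [FiniteDimensional F W] {A : Submodule F W} {v : W}
    (hvA : v ∈ A) (hv : v ≠ 0) (j : ℕ) :
    Nat.card {E : Submodule F W // E ≤ A ∧ v ∈ E ∧ finrank F E = j + 1} =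
      numSubspaces F (finrank F A - 1) j := by
  rw [card_submodule_le_and, ← card_submodule_mem_finrank_eq (v := (⟨v, hvA⟩ : A)) (by simpa)]
  simp [hvA]

theorem finrank_inf_add_one_of_not_le [FiniteDimensional F W] {A B E : Submodule F W}
    (hBA : B ≤ A) (hrk : finrank F B + 1 = finrank F A) (hEA : E ≤ A) (hEB : ¬ E ≤ B) :
    finrank F (E ⊓ B : Submodule F W) + 1 = finrank F E := by
  have h1 : finrank F B < finrank F (E ⊔ B : Submodule F W) :=
    Submodule.finrank_lt_finrank_of_lt (right_lt_sup.2 hEB)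
  have h2 : finrank F (E ⊔ B : Submodule F W) ≤ finrank F A :=
    Submodule.finrank_mono (sup_le hEA hBA)
  have h3 := Submodule.finrank_sup_add_finrank_inf_eq E B
  omega

end Subspaces

section FiniteSpaces

variable {F W : Type*} [Field F] [Fintype F] [AddCommGroup W] [Module F W] [Fintype W]

theorem card_filter_mem_submodule (A : Submodule F W) :
    #{v | v ∈ A} = Fintype.card F ^ finrank F A := by
  rw [← Fintype.card_subtype, ← card_eq_pow_finrank (K := F) (V := A)]

theorem card_filter_mem_ne_zero [DecidableEq W] (A : Submodule F W) :
    #{v | v ∈ A ∧ v ≠ 0} = Fintype.card F ^ finrank F A - 1 := by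
  rw [← card_filter_mem_submodule, ← card_erase_of_mem (a := (0 : W)) (by simp)]
  congr 1
  ext v
  simp [and_comm]

theorem card_filter_mem_not_mem {A B : Submodule F W} (hBA : B ≤ A)
    (hrk : finrank F B + 1 = finrank F A) :
    #{v | v ∈ A ∧ v ∉ B} = Fintype.card F ^ finrank F B * (Fintype.card F - 1) := by
  have hdiff : univ.filter (fun v => v ∈ A ∧ v ∉ B) =
      univ.filter (· ∈ A) \ univ.filter (· ∈ B) := by
    ext v; simp
  have hsub : univ.filter (· ∈ B) ⊆ univ.filter (· ∈ A) := by
    intro v; simpa using fun hv => hBA hv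
  rw [hdiff, card_sdiff_of_subset hsub, card_filter_mem_submodule, card_filter_mem_submodule,
    ← hrk, pow_succ, Nat.mul_sub_one]

theorem card_submodule_le_finrank_succ_mul [DecidableEq W] (A : Submodule F W) (j : ℕ) :
    #{E : Submodule F W | E ≤ A ∧ finrank F E = j + 1} * (Fintype.card F ^ (j + 1) - 1) =
      (Fintype.card F ^ finrank F A - 1) * numSubspaces F (finrank F A - 1) j := by
  set s := univ.filter fun E : Submodule F W => E ≤ A ∧ finrank F E = j + 1
  set t := univ.filter fun v : W => v ∈ A ∧ v ≠ 0
  have hs : ∀ E ∈ s, #(t.bipartiteAbove (fun E v => v ∈ E) E) = Fintype.card F ^ (j + 1) - 1 := by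
    intro E hE
    simp only [s, mem_filter, mem_univ, true_and] at hE
    rw [← hE.2, ← card_filter_mem_ne_zero, bipartiteAbove, filter_filter]
    congr 1
    ext v
    simp only [mem_filter, mem_univ, true_and]
    exact ⟨fun h => ⟨h.2, h.1.2⟩, fun h => ⟨⟨hE.1 h.1, h.2⟩, h.1⟩⟩
  have ht : ∀ v ∈ t, #(s.bipartiteBelow (fun E v => v ∈ E) v) =
      numSubspaces F (finrank F A - 1) j := by
    intro v hv
    simp only [t, mem_filter, mem_univ, true_and] at hv
    rw [← card_submodule_le_mem_finrank_eq hv.1 hv.2, eq_comm]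
    exact Nat.subtype_card _ fun E => by simp [s, bipartiteBelow]; tauto
  have key := sum_card_bipartiteAbove_eq_sum_card_bipartiteBelow (s := s) (t := t)
    (r := fun E v => v ∈ E)
  rwa [sum_const_nat hs, sum_const_nat ht, card_filter_mem_ne_zero] at key

theorem card_submodule_not_le_hyperplane_mul {A B : Submodule F W} (hBA : B ≤ A)
    (hrk : finrank F B + 1 = finrank F A) (j : ℕ) :
    #{E : Submodule F W | E ≤ A ∧ finrank F E = j + 1 ∧ ¬ E ≤ B} * Fintype.card F ^ j =
      Fintype.card F ^ finrank F B * numSubspaces F (finrank F B) j := by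
  -- Each `v ∈ A \ B` lies only in subspaces not contained in `B`, so it is counted
  -- `[dim B, j]` times.
  set s := univ.filter fun E : Submodule F W => E ≤ A ∧ finrank F E = j + 1 ∧ ¬ E ≤ B
  set t := univ.filter fun v : W => v ∈ A ∧ v ∉ B
  have hs : ∀ E ∈ s, #(t.bipartiteAbove (fun E v => v ∈ E) E) =
      Fintype.card F ^ j * (Fintype.card F - 1) := by
    intro E hE
    simp only [s, mem_filter, mem_univ, true_and] at hE
    have hEB := finrank_inf_add_one_of_not_le hBA hrk hE.1 hE.2.2
    rw [show j = finrank F (E ⊓ B : Submodule F W) by omega,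
      ← card_filter_mem_not_mem inf_le_left hEB, bipartiteAbove, filter_filter]
    congr 1
    ext v
    simp only [mem_filter, mem_univ, true_and, Submodule.mem_inf]
    exact ⟨fun h => ⟨h.2, fun h' => h.1.2 h'.2⟩,
      fun h => ⟨⟨hE.1 h.1, fun h' => h.2 ⟨h.1, h'⟩⟩, h.1⟩⟩
  have ht : ∀ v ∈ t, #(s.bipartiteBelow (fun E v => v ∈ E) v) =
      numSubspaces F (finrank F B) j := by
    intro v hv
    simp only [t, mem_filter, mem_univ, true_and] at hv
    have hv0 : v ≠ 0 := fun h => hv.2 (h ▸ B.zero_mem)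
    rw [show finrank F B = finrank F A - 1 by omega, ← card_submodule_le_mem_finrank_eq hv.1 hv0,
      eq_comm]
    refine Nat.subtype_card _ fun E => ?_
    simp only [s, bipartiteBelow, mem_filter, mem_univ, true_and]
    exact ⟨fun h => ⟨h.1.1, h.2, h.1.2.1⟩,
      fun h => ⟨⟨h.1, h.2.2, fun hEB => hv.2 (hEB h.2.1)⟩, h.2.1⟩⟩
  have key := sum_card_bipartiteAbove_eq_sum_card_bipartiteBelow (s := s) (t := t)
    (r := fun E v => v ∈ E)
  rw [sum_const_nat hs, sum_const_nat ht, card_filter_mem_not_mem hBA hrk] at key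
  have hq : 0 < Fintype.card F - 1 := Nat.sub_pos_of_lt Fintype.one_lt_card
  apply Nat.eq_of_mul_eq_mul_right hq
  rw [mul_assoc, key]; ring

end FiniteSpaces

section Codes

variable {F : Type*} [Field F] {n : ℕ} {C : Submodule F (Fin n → F)}

def coordKer (x : Fin n) : Submodule F (Fin n → F) :=
  LinearMap.ker (LinearMap.proj x)

theorem mem_coordKer {c : Fin n → F} {x : Fin n} : c ∈ coordKer x ↔ c x = 0 := Iff.rfl

theorem mem_codeSupp_iff_not_le {D : Submodule F (Fin n → F)} {x : Fin n} :
    x ∈ codeSupp D ↔ ¬ D ≤ coordKer x := by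
  simp [codeSupp, SetLike.le_def, mem_coordKer]

theorem codeSupp_mono {D E : Submodule F (Fin n → F)} (h : D ≤ E) : codeSupp D ⊆ codeSupp E :=
  fun _ ⟨d, hd, hdx⟩ => ⟨d, h hd, hdx⟩

theorem finrank_inf_coordKer_add_one {x : Fin n} (hx : x ∈ codeSupp C) :
    finrank F (C ⊓ coordKer x : Submodule F (Fin n → F)) + 1 = finrank F C := by
  have hf : (LinearMap.proj x).comp C.subtype ≠ 0 := by
    obtain ⟨c, hc, hcx⟩ := hx
    exact fun h => hcx (LinearMap.congr_fun h ⟨c, hc⟩)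
  rw [← Module.Dual.finrank_ker_add_one_of_ne_zero hf, LinearMap.ker_comp,
    ← Submodule.finrank_map_subtype_eq, Submodule.map_comap_subtype]
  rfl

variable (C) in
theorem dGHW_finrank : dGHW C (finrank F C) = codeWt C := by
  refine le_antisymm (Nat.sInf_le ⟨C, le_rfl, rfl, rfl⟩) (le_csInf ⟨_, C, le_rfl, rfl, rfl⟩ ?_)
  rintro _ ⟨D, hDC, hD, rfl⟩
  rw [Submodule.eq_of_le_of_finrank_eq hDC hD]

theorem dGHW_le {D : Submodule F (Fin n → F)} {i : ℕ} (hDC : D ≤ C) (hD : finrank F D = i) :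
    dGHW C i ≤ codeWt D :=
  Nat.sInf_le ⟨D, hDC, hD, rfl⟩

theorem sum_codeWt_eq_sum_card_not_le_coordKer (T : Finset (Submodule F (Fin n → F)))
    (hT : ∀ E ∈ T, E ≤ C) :
    ∑ E ∈ T, codeWt E = ∑ x ∈ (codeSupp C).toFinset, #{E ∈ T | ¬ E ≤ coordKer x} := by
  refine (sum_congr rfl fun E hE => ?_).trans
    (sum_card_bipartiteAbove_eq_sum_card_bipartiteBelow (r := fun E x => ¬ E ≤ coordKer x))
  rw [codeWt, Set.ncard_eq_toFinset_card', bipartiteAbove]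
  congr 1
  ext x
  simp only [Set.mem_toFinset, mem_filter, ← mem_codeSupp_iff_not_le]
  exact ⟨fun h => ⟨codeSupp_mono (hT E hE) h, h⟩, And.right⟩

theorem ncard_support_add_card_zeros {c : Fin n → F} (hcC : c ∈ C) :
    ({x | c x ≠ 0} : Set (Fin n)).ncard + #{x ∈ (codeSupp C).toFinset | c x = 0} = codeWt C := by
  rw [codeWt, Set.ncard_eq_toFinset_card', Set.ncard_eq_toFinset_card', add_comm,
    ← card_filter_add_card_filter_not (s := (codeSupp C).toFinset) (fun x => c x = 0)]
  congr 2
  ext x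
  simp only [Set.mem_toFinset, mem_filter]
  exact ⟨fun h => ⟨⟨c, hcC, h⟩, h⟩, And.right⟩

end Codes

section FiniteCodes

variable {F : Type*} [Field F] [Fintype F] {n : ℕ} {C : Submodule F (Fin n → F)}

variable (C) in
theorem sum_ncard_support_nonzero_codewords :
    ∑ c ∈ {c | c ∈ C ∧ c ≠ 0}, ({x | c x ≠ 0} : Set (Fin n)).ncard =
      codeWt C * (Fintype.card F ^ (finrank F C - 1) * (Fintype.card F - 1)) := by
  set s : Finset (Fin n → F) := {c | c ∈ C ∧ c ≠ 0}
  have hx : ∀ x ∈ (codeSupp C).toFinset, #(s.filter fun c => c x ≠ 0) =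
      Fintype.card F ^ (finrank F C - 1) * (Fintype.card F - 1) := by
    intro x hx
    rw [Set.mem_toFinset] at hx
    have hrk := finrank_inf_coordKer_add_one hx
    rw [show finrank F C - 1 = finrank F (C ⊓ coordKer x : Submodule F (Fin n → F)) by omega,
      ← card_filter_mem_not_mem inf_le_left hrk, filter_filter]
    congr 1
    ext c
    simp only [mem_filter, mem_univ, true_and, Submodule.mem_inf, mem_coordKer]
    exact ⟨fun h => ⟨h.1.1, fun h' => h.2 h'.2⟩,
      fun h => ⟨⟨h.1, fun h0 => h.2 ⟨h.1, by simp [h0]⟩⟩, fun h0 => h.2 ⟨h.1, h0⟩⟩⟩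
  rw [codeWt, Set.ncard_eq_toFinset_card', ← sum_const_nat hx]
  refine (sum_congr rfl fun c hc => ?_).trans
    (sum_card_bipartiteAbove_eq_sum_card_bipartiteBelow (r := fun (c : Fin n → F) x => c x ≠ 0))
  rw [Set.ncard_eq_toFinset_card', bipartiteAbove]
  congr 1
  ext x
  simp only [Set.mem_toFinset, Set.mem_ofPred_eq, mem_filter]
  exact ⟨fun h => ⟨⟨c, (mem_filter.1 hc).2.1, h⟩, h⟩, And.right⟩

theorem sum_codeWt_subcodes_mul (j : ℕ) :
    (∑ E ∈ {E | E ≤ C ∧ finrank F E = j + 1}, codeWt E) * Fintype.card F ^ j =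
      codeWt C * (Fintype.card F ^ (finrank F C - 1) * numSubspaces F (finrank F C - 1) j) := by
  rw [sum_codeWt_eq_sum_card_not_le_coordKer _ fun E hE => (mem_filter.1 hE).2.1, sum_mul, codeWt,
    Set.ncard_eq_toFinset_card']
  refine sum_const_nat fun x hx => ?_
  have hrk := finrank_inf_coordKer_add_one (Set.mem_toFinset.1 hx)
  rw [show finrank F C - 1 = finrank F (C ⊓ coordKer x : Submodule F (Fin n → F)) by omega,
    ← card_submodule_not_le_hyperplane_mul inf_le_left hrk, filter_filter]
  congr 2
  ext E
  simp only [mem_filter, mem_univ, true_and, le_inf_iff]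
  tauto

theorem codeWt_eq_dGHW_of_rel {j : ℕ} (hjk : j + 1 < finrank F C)
    (hrel : Fintype.card F ^ (finrank F C - (j + 1)) * (Fintype.card F ^ (j + 1) - 1) *
      dGHW C (finrank F C) = (Fintype.card F ^ finrank F C - 1) * dGHW C (j + 1))
    {D : Submodule F (Fin n → F)} (hDC : D ≤ C) (hD : finrank F D = j + 1) :
    codeWt D = dGHW C (j + 1) := by
  set q := Fintype.card F
  set k := finrank F C
  set S : Finset (Submodule F (Fin n → F)) := {E | E ≤ C ∧ finrank F E = j + 1}
  have hW := sum_codeWt_subcodes_mul (C := C) j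
  have hL := card_submodule_le_finrank_succ_mul C j
  rw [dGHW_finrank] at hrel
  have hq : 1 < q := Fintype.one_lt_card
  have hpos : 0 < q ^ j * (q ^ (j + 1) - 1) :=
    Nat.mul_pos (Nat.pow_pos (by omega)) (Nat.sub_pos_of_lt (Nat.one_lt_pow (by omega) hq))
  have hpow : q ^ (k - 1) = q ^ j * q ^ (k - (j + 1)) := by
    rw [← pow_add]; congr 1; omega
  have hsum : ∑ E ∈ S, codeWt E = ∑ _E ∈ S, dGHW C (j + 1) := by
    rw [sum_const, smul_eq_mul]
    refine Nat.eq_of_mul_eq_mul_right hpos ?_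
    calc (∑ E ∈ S, codeWt E) * (q ^ j * (q ^ (j + 1) - 1))
        = codeWt C * (q ^ (k - 1) * numSubspaces F (k - 1) j) * (q ^ (j + 1) - 1) := by
          rw [← hW]; ring
      _ = q ^ j * (q ^ (k - (j + 1)) * (q ^ (j + 1) - 1) * codeWt C) *
            numSubspaces F (k - 1) j := by
          rw [hpow]; ring
      _ = #S * (q ^ (j + 1) - 1) * (q ^ j * dGHW C (j + 1)) := by
          rw [hrel, hL]; ring
      _ = #S * dGHW C (j + 1) * (q ^ j * (q ^ (j + 1) - 1)) := by ring
  have hle : ∀ E ∈ S, dGHW C (j + 1) ≤ codeWt E := fun E hE =>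
    dGHW_le (mem_filter.1 hE).2.1 (mem_filter.1 hE).2.2
  exact ((sum_eq_sum_iff_of_le hle).1 hsum.symm D (mem_filter.2 ⟨mem_univ D, hDC, hD⟩)).symm

theorem numSubspaces_mul_add_card_zeros_mul {j d : ℕ}
    (hS : ∀ E ≤ C, finrank F E = j + 1 → codeWt E = d) {c : Fin n → F} (hcC : c ∈ C) (hc : c ≠ 0) :
    numSubspaces F (finrank F C - 1) j * d +
        #{x ∈ (codeSupp C).toFinset | c x = 0} * numSubspaces F (finrank F C - 2) j =
      codeWt C * numSubspaces F (finrank F C - 1) j := by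
  set T : Finset (Submodule F (Fin n → F)) := {E | E ≤ C ∧ c ∈ E ∧ finrank F E = j + 1}
  have hTC : ∀ E ∈ T, E ≤ C := fun E hE => (mem_filter.1 hE).2.1
  have hT : #T = numSubspaces F (finrank F C - 1) j := by
    rw [← card_submodule_le_mem_finrank_eq hcC hc]
    exact (Nat.subtype_card _ fun E => by simp [T]).symm
  have hsum : ∑ E ∈ T, codeWt E = #T * d :=
    sum_const_nat fun E hE => hS E (hTC E hE) (mem_filter.1 hE).2.2.2
  have hle : ∀ x ∈ (codeSupp C).toFinset, #{E ∈ T | E ≤ coordKer x} =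
      if c x = 0 then numSubspaces F (finrank F C - 2) j else 0 := by
    intro x hx
    split_ifs with hcx
    · have hrk := finrank_inf_coordKer_add_one (Set.mem_toFinset.1 hx)
      rw [show finrank F C - 2 = finrank F (C ⊓ coordKer x : Submodule F (Fin n → F)) - 1 by omega,
        ← card_submodule_le_mem_finrank_eq (Submodule.mem_inf.2 ⟨hcC, hcx⟩) hc]
      refine (Nat.subtype_card _ fun E => ?_).symm
      simp only [T, mem_filter, mem_univ, true_and, le_inf_iff]
      tauto
    · exact card_eq_zero.2 (filter_eq_empty_iff.2 fun E hE hEx => hcx (hEx (mem_filter.1 hE).2.2.1))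
  calc numSubspaces F (finrank F C - 1) j * d +
        #{x ∈ (codeSupp C).toFinset | c x = 0} * numSubspaces F (finrank F C - 2) j
      = ∑ x ∈ (codeSupp C).toFinset, (#{E ∈ T | E ≤ coordKer x} + #{E ∈ T | ¬ E ≤ coordKer x}) := by
        rw [sum_add_distrib, ← sum_codeWt_eq_sum_card_not_le_coordKer T hTC, hsum, hT,
          sum_congr rfl hle, sum_ite, sum_const, sum_const_zero, smul_eq_mul, add_zero, add_comm]
    _ = codeWt C * numSubspaces F (finrank F C - 1) j := by
        rw [sum_congr rfl fun x _ => card_filter_add_card_filter_not _, sum_const, smul_eq_mul, hT,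
          codeWt, Set.ncard_eq_toFinset_card']

theorem ncard_support_eq_of_codeWt_eq {j d : ℕ} (hjk : j + 1 < finrank F C)
    (hS : ∀ E ≤ C, finrank F E = j + 1 → codeWt E = d) {c c' : Fin n → F}
    (hcC : c ∈ C) (hc : c ≠ 0) (hc'C : c' ∈ C) (hc' : c' ≠ 0) :
    ({x | c x ≠ 0} : Set (Fin n)).ncard = ({x | c' x ≠ 0} : Set (Fin n)).ncard := by
  have hP : 0 < numSubspaces F (finrank F C - 2) j := numSubspaces_pos (by omega)
  have hzeros : #{x ∈ (codeSupp C).toFinset | c x = 0} = #{x ∈ (codeSupp C).toFinset | c' x = 0} :=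
    Nat.eq_of_mul_eq_mul_right hP <| by
      linarith [numSubspaces_mul_add_card_zeros_mul hS hcC hc,
        numSubspaces_mul_add_card_zeros_mul hS hc'C hc']
  linarith [ncard_support_add_card_zeros hcC, ncard_support_add_card_zeros hc'C]

end FiniteCodes

/-- If for some `1 ≤ i < k` we have `q^(k-i) * (q^i - 1) * d_k = (q^k - 1) * d_i`, then `C`
is a constant weight code, of weight `d` where `d * (q^k - 1) = d_k * q^(k-1) * (q-1)`. -/
theorem constant_weight_of_dk_di_relation
    {F : Type*} [Field F] [Fintype F] {n k q i : ℕ} (hq : Fintype.card F = q)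
    (C : Submodule F (Fin n → F)) (hk : Module.finrank F C = k)
    (hi1 : 1 ≤ i) (hik : i < k)
    (hrel : q ^ (k - i) * (q ^ i - 1) * dGHW C k = (q ^ k - 1) * dGHW C i) :
    ∃ d : ℕ, (∀ c ∈ C, c ≠ 0 → ({x | c x ≠ 0} : Set (Fin n)).ncard = d) ∧
      d * (q ^ k - 1) = dGHW C k * (q ^ (k - 1) * (q - 1)) := by
  subst hq hk
  obtain ⟨j, rfl⟩ : ∃ j, i = j + 1 := ⟨i - 1, by omega⟩
  have hS : ∀ E ≤ C, finrank F E = j + 1 → codeWt E = dGHW C (j + 1) :=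
    fun _ hEC hE => codeWt_eq_dGHW_of_rel hik hrel hEC hE
  obtain ⟨c₀, hc₀C, hc₀⟩ := Submodule.exists_mem_ne_zero_of_ne_bot fun h : C = ⊥ => by
    have := Submodule.finrank_eq_zero.2 h; omega
  have hconst : ∀ c ∈ C, c ≠ 0 →
      ({x | c x ≠ 0} : Set (Fin n)).ncard = ({x | c₀ x ≠ 0} : Set (Fin n)).ncard :=
    fun c hcC hc => ncard_support_eq_of_codeWt_eq hik hS hcC hc hc₀C hc₀
  refine ⟨_, hconst, ?_⟩
  have hsum := sum_ncard_support_nonzero_codewords C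
  rw [sum_const_nat fun c hc => hconst c (mem_filter.1 hc).2.1 (mem_filter.1 hc).2.2,
    card_filter_mem_ne_zero C, ← dGHW_finrank] at hsum
  rw [mul_comm, hsum]
end

section
/- Let C be a k-dimensional linear code over a finite field F_q with q elements. Assume there exists an integer α such that for every 1 ≤ i ≤ k the generalized Hamming weights satisfy q^{i−1}(q−1) · d_i = α · (q^i − 1), i.e. d_i = α (q^i − 1)/(q^{i−1}(q−1)). Then C is a constant weight code of weight α. -/
/-- If there is an `α` with `q^(i-1) * (q-1) * d_i = α * (q^i - 1)` for all `1 ≤ i ≤ k`,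
then `C` is a constant weight code of weight `α`. -/
theorem constant_weight_of_weight_hierarchy
    {F : Type*} [Field F] [Fintype F] {n k q : ℕ} (hq : Fintype.card F = q)
    (C : Submodule F (Fin n → F)) (hk : Module.finrank F C = k)
    (α : ℕ)
    (hrel : ∀ i, 1 ≤ i → i ≤ k →
      q ^ (i - 1) * (q - 1) * dGHW C i = α * (q ^ i - 1)) :
    ∀ c ∈ C, c ≠ 0 → ({x | c x ≠ 0} : Set (Fin n)).ncard = α := by
  classical
  intro c hc hc0
  have hq2 : 2 ≤ q := by rw [← hq]; exact Fintype.one_lt_card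
  have hntC : Nontrivial C := ⟨⟨c, hc⟩, 0, by simp [Subtype.ext_iff, hc0]⟩
  have hk1 : 1 ≤ k := by rw [← hk]; exact Module.finrank_pos
  -- translate ncard of a set of coordinates to a Finset card
  have hwt : ∀ (p : Fin n → Prop) (inst : DecidablePred p), ({x | p x} : Set (Fin n)).ncard
      = (@Finset.filter _ p inst Finset.univ).card := by
    intro p inst
    rw [← Nat.card_coe_set_eq, Nat.card_eq_fintype_card]
    exact Fintype.card_subtype p
  set wt : (Fin n → F) → ℕ := fun v => (Finset.univ.filter fun x => v x ≠ 0).card with hwtdef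
  -- d_1 = α
  have hd1 : dGHW C 1 = α := by
    have h1 := hrel 1 le_rfl hk1
    simp only [Nat.sub_self, pow_zero, one_mul, pow_one] at h1
    rw [mul_comm α] at h1
    exact Nat.eq_of_mul_eq_mul_left (by omega) h1
  -- lower bound: every nonzero codeword has weight ≥ α
  have hlb : ∀ v : Fin n → F, v ∈ C → v ≠ 0 → α ≤ wt v := by
    intro v hv hv0
    have hsupp : codeSupp (Submodule.span F {v}) = {x | v x ≠ 0} := by
      ext x
      constructor
      · rintro ⟨d, hd, hdx⟩
        rw [Submodule.mem_span_singleton] at hd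
        obtain ⟨a, rfl⟩ := hd
        simp only [Pi.smul_apply, smul_eq_mul] at hdx
        intro h
        exact hdx (by rw [h, mul_zero])
      · intro hx
        exact ⟨v, Submodule.mem_span_singleton_self v, hx⟩
    have hmem : wt v ∈ {m | ∃ D : Submodule F (Fin n → F),
        D ≤ C ∧ Module.finrank F D = 1 ∧ codeWt D = m} := by
      refine ⟨Submodule.span F {v}, ?_, finrank_span_singleton hv0, ?_⟩
      · rw [Submodule.span_le, Set.singleton_subset_iff]; exact hv
      · rw [codeWt, hsupp]
        simp only [hwtdef]
        exact hwt _ _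
    have h := Nat.sInf_le hmem
    have h' : dGHW C 1 ≤ wt v := h
    rwa [hd1] at h'
  -- d_k = codeWt C
  have hdk : dGHW C k = codeWt C := by
    have hset : {m | ∃ D : Submodule F (Fin n → F),
        D ≤ C ∧ Module.finrank F D = k ∧ codeWt D = m} = {codeWt C} := by
      ext m
      simp only [Set.mem_setOf_eq, Set.mem_singleton_iff]
      constructor
      · rintro ⟨D, hDC, hDr, rfl⟩
        rw [Submodule.eq_of_le_of_finrank_eq hDC (by rw [hDr, hk])]
      · rintro rfl
        exact ⟨C, le_rfl, hk, rfl⟩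
    rw [dGHW, hset, csInf_singleton]
  -- cardinalities
  have hcardC : Fintype.card C = q ^ k := by
    rw [Module.card_eq_pow_finrank (K := F), hk, hq]
  -- evaluation map
  set ψ : Fin n → (C →ₗ[F] F) := fun x => (LinearMap.proj x).comp C.subtype with hψ
  -- count of codewords nonzero at a coordinate
  have hcount0 : ∀ x : Fin n, ¬ (∃ d ∈ C, d x ≠ 0) →
      (Finset.univ.filter fun v : C => ¬ (v : Fin n → F) x = 0).card = 0 := by
    intro x hx
    push_neg at hx
    rw [Finset.card_eq_zero, Finset.filter_eq_empty_iff]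
    intro v _
    simp only [not_not]
    exact hx v v.2
  have hcount1 : ∀ x : Fin n, (∃ d ∈ C, d x ≠ 0) →
      (Finset.univ.filter fun v : C => ¬ (v : Fin n → F) x = 0).card
      = q ^ k - q ^ (k - 1) := by
    intro x hx
    obtain ⟨d, hd, hdx⟩ := hx
    have hsurj : Function.Surjective (ψ x) := by
      intro b
      refine ⟨(b * (d x)⁻¹) • ⟨d, hd⟩, ?_⟩
      show (b * (d x)⁻¹) • d x = b
      rw [smul_eq_mul, mul_assoc, inv_mul_cancel₀ hdx, mul_one]
    have hker : Module.finrank F (LinearMap.ker (ψ x)) = k - 1 := by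
      have h := LinearMap.finrank_range_add_finrank_ker (ψ x)
      rw [LinearMap.range_eq_top.mpr hsurj, finrank_top, Module.finrank_self, hk] at h
      omega
    have hcardker : Fintype.card (LinearMap.ker (ψ x)) = q ^ (k - 1) := by
      rw [Module.card_eq_pow_finrank (K := F), hker, hq]
    have e1 : (Finset.univ.filter fun v : C => (v : Fin n → F) x = 0).card
        = Fintype.card (LinearMap.ker (ψ x)) := by
      rw [← Fintype.card_subtype]
      refine Fintype.card_congr (Equiv.subtypeEquivRight fun v => ?_)
      rw [LinearMap.mem_ker]
      rfl
    have e2 := Finset.card_filter_add_card_filter_not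
      (s := (Finset.univ : Finset C)) (p := fun v : C => (v : Fin n → F) x = 0)
    rw [Finset.card_univ, hcardC, e1, hcardker] at e2
    omega
  -- the double-counting identity
  have hsum : ∑ v : C, wt (v : Fin n → F) = codeWt C * (q ^ k - q ^ (k - 1)) := by
    have swap : ∑ v : C, wt (v : Fin n → F)
        = ∑ x : Fin n, (Finset.univ.filter fun v : C => ¬ (v : Fin n → F) x = 0).card := by
      simp only [hwtdef, Finset.card_filter, ne_eq]
      exact Finset.sum_comm
    have hwtC : codeWt C = (Finset.univ.filter fun x => ∃ d ∈ C, d x ≠ 0).card := by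
      rw [codeWt, show codeSupp C = {x | ∃ d ∈ C, d x ≠ 0} from rfl]
      exact hwt _ _
    rw [swap]
    calc ∑ x : Fin n, (Finset.univ.filter fun v : C => ¬ (v : Fin n → F) x = 0).card
        = ∑ x ∈ Finset.univ.filter (fun x => ∃ d ∈ C, d x ≠ 0),
            (Finset.univ.filter fun v : C => ¬ (v : Fin n → F) x = 0).card := by
          refine (Finset.sum_subset (Finset.filter_subset _ _) ?_).symm
          intro x _ hx
          refine hcount0 x ?_
          intro hP
          exact hx (Finset.mem_filter.mpr ⟨Finset.mem_univ x, hP⟩)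
      _ = ∑ _x ∈ Finset.univ.filter (fun x => ∃ d ∈ C, d x ≠ 0), (q ^ k - q ^ (k - 1)) := by
          refine Finset.sum_congr rfl fun x hx => ?_
          exact hcount1 x (Finset.mem_filter.mp hx).2
      _ = codeWt C * (q ^ k - q ^ (k - 1)) := by
          rw [Finset.sum_const, smul_eq_mul, hwtC]
  -- rewrite total sum using hrel at k
  have hpow : q ^ k - q ^ (k - 1) = q ^ (k - 1) * (q - 1) := by
    rw [Nat.mul_sub, mul_one, ← pow_succ, Nat.sub_add_cancel hk1]
  have hrelk := hrel k hk1 le_rfl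
  rw [hdk] at hrelk
  have hsum' : ∑ v : C, wt (v : Fin n → F) = α * (q ^ k - 1) := by
    rw [hsum, hpow, ← hrelk]; ring
  -- split off zero
  set E : Finset C := Finset.univ.erase 0 with hE
  have hzero : wt ((0 : C) : Fin n → F) = 0 := by
    simp [hwtdef]
  have hsplit : ∑ v ∈ E, wt (v : Fin n → F) = α * (q ^ k - 1) := by
    calc ∑ v ∈ E, wt (v : Fin n → F)
        = ∑ v ∈ E, wt (v : Fin n → F) + wt ((0 : C) : Fin n → F) := by rw [hzero, add_zero]
      _ = ∑ v : C, wt (v : Fin n → F) := by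
            rw [hE]
            exact Finset.sum_erase_add Finset.univ _ (Finset.mem_univ 0)
      _ = α * (q ^ k - 1) := hsum'
  have hcardE : E.card = q ^ k - 1 := by
    rw [hE, Finset.card_erase_of_mem (Finset.mem_univ 0), Finset.card_univ, hcardC]
  have hcmem : (⟨c, hc⟩ : C) ∈ E := by
    refine Finset.mem_erase.mpr ⟨?_, Finset.mem_univ _⟩
    intro hEq
    exact hc0 (by simpa using congrArg Subtype.val hEq)
  have hlbE : ∀ v ∈ E, α ≤ wt (v : Fin n → F) := by
    intro v hv
    have hv0 : (v : Fin n → F) ≠ 0 := by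
      intro hEq
      exact (Finset.mem_erase.mp hv).1 (Subtype.ext hEq)
    exact hlb v v.2 hv0
  have hub : wt c ≤ α := by
    by_contra h
    push_neg at h
    have hlt : ∑ _v ∈ E, α < ∑ v ∈ E, wt (v : Fin n → F) :=
      Finset.sum_lt_sum hlbE ⟨⟨c, hc⟩, hcmem, h⟩
    rw [Finset.sum_const, smul_eq_mul, hcardE, hsplit, mul_comm] at hlt
    omega
  have hge := hlb c hc hc0
  have hfin : ({x | c x ≠ 0} : Set (Fin n)).ncard = wt c := by
    simp only [hwtdef]
    exact hwt _ _
  rw [hfin]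
  omega
end

section
/- Let C be a k-dimensional linear code over a finite field F_q with q elements and let 1 ≤ i < k. Then the generalized Hamming weights satisfy q^{k−i}(q^i − 1) · d_k ≥ (q^k − 1) · d_i, with equality if and only if all i-dimensional subcodes of C have the same weight. -/
/-!
Double count the pairs `(D, x)` with `D` an `i`-dimensional subcode of `C` and `x ∈ Supp(D)`.
A coordinate `x ∈ Supp(C)` is a nonzero functional on `C`; the subcodes missing it are the
`i`-dimensional subspaces of its kernel, a hyperplane of `C`. Counting subspaces through their
linearly independent spanning tuples, a fraction `q^(k-i) (q^i - 1) / (q^k - 1)` of all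
`i`-dimensional subcodes has `x` in its support, so the average weight of an `i`-dimensional
subcode is `q^(k-i) (q^i - 1) d_k / (q^k - 1)`. It is at least `d_i`, with equality iff every
`i`-dimensional subcode has weight `d_i`.
-/

open Module Finset

theorem mul_prod_range_pow_sub_pow {R : Type*} [CommRing R] (q : R) (i a : ℕ) :
    (q ^ (i + a + 1) - 1) * ∏ j ∈ range i, (q ^ (i + a) - q ^ j) =
      (q ^ (a + 1) - 1) * ∏ j ∈ range i, (q ^ (i + a + 1) - q ^ j) := by
  induction i generalizing a with
  | zero => simp
  | succ i ih =>
    have h := ih (a + 1)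
    rw [show i + (a + 1) = i + 1 + a by ring] at h
    rw [prod_range_succ, prod_range_succ]
    linear_combination (q ^ (i + 1 + a) - q ^ i) * h

theorem Nat.cast_prod_range_pow_sub_pow {q i m : ℕ} (hq : 1 ≤ q) (hi : i ≤ m) :
    ((∏ j ∈ range i, (q ^ m - q ^ j) : ℕ) : ℤ) = ∏ j ∈ range i, ((q : ℤ) ^ m - (q : ℤ) ^ j) := by
  push_cast
  refine prod_congr rfl fun j hj => ?_
  rw [Nat.cast_sub (Nat.pow_le_pow_right hq (by grind)), Nat.cast_pow, Nat.cast_pow]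

theorem Nat.card_eq_card_mul_of_card_fiber_eq {α β : Type*} [Finite α] [Finite β] (f : α → β)
    {c : ℕ} (h : ∀ b, Nat.card {a // f a = b} = c) : Nat.card α = Nat.card β * c := by
  have := Fintype.ofFinite β
  rw [Nat.card_congr (Equiv.sigmaFiberEquiv f).symm, Nat.card_sigma, Nat.card_eq_fintype_card]
  simp [h]

theorem Finset.sum_eq_card_mul_iff {ι : Type*} {s : Finset ι} {f : ι → ℕ} {m : ℕ}
    (h : ∀ i ∈ s, m ≤ f i) : ∑ i ∈ s, f i = #s * m ↔ ∀ i ∈ s, f i = m := by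
  rw [← smul_eq_mul, ← sum_const, eq_comm, sum_eq_sum_iff_of_le h]
  exact forall₂_congr fun _ _ => eq_comm

section Subspaces

variable {F V : Type*} [Field F] [AddCommGroup V] [Module F V]

theorem Submodule.finrank_inf_ker_add_one {W : Submodule F V} [FiniteDimensional F W]
    {φ : Module.Dual F V} (hW : ¬ W ≤ LinearMap.ker φ) :
    finrank F ↥(W ⊓ LinearMap.ker φ) + 1 = finrank F W := by
  have hφ : φ ∘ₗ W.subtype ≠ 0 := fun h =>
    hW fun v hv => by simpa using LinearMap.congr_fun h ⟨v, hv⟩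
  rw [← Module.Dual.finrank_ker_add_one_of_ne_zero hφ, LinearMap.ker_comp,
    ← Submodule.map_comap_subtype, Submodule.finrank_map_subtype_eq]

variable [Finite V]

def linearIndependentSpanEquiv {i : ℕ} (D : {D : Submodule F V // finrank F D = i}) :
    {s : {s : Fin i → V // LinearIndependent F s} // Submodule.span F (Set.range s.1) = D.1} ≃
      {t : Fin i → D.1 // LinearIndependent F t} where
  toFun s := ⟨fun j => ⟨s.1.1 j, s.2.le (Submodule.subset_span (Set.mem_range_self j))⟩,
    .of_comp D.1.subtype s.1.2⟩
  invFun t := ⟨⟨D.1.subtype ∘ t.1, t.2.map' _ (Submodule.ker_subtype _)⟩, by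
    rw [Set.range_comp, Submodule.span_image,
      (Submodule.span F (Set.range t.1)).eq_top_of_finrank_eq
        (by rw [finrank_span_eq_card t.2, Fintype.card_fin, D.2]),
      Submodule.map_subtype_top]⟩
  left_inv _ := rfl
  right_inv _ := rfl

namespace Submodule

noncomputable def subspacesOfFinrank (W : Submodule F V) (i : ℕ) : Finset (Submodule F V) :=
  (Set.toFinite {D : Submodule F V | D ≤ W ∧ finrank F D = i}).toFinset

@[simp]
theorem mem_subspacesOfFinrank {W D : Submodule F V} {i : ℕ} :
    D ∈ W.subspacesOfFinrank i ↔ D ≤ W ∧ finrank F D = i :=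
  Set.Finite.mem_toFinset _

theorem card_subspacesOfFinrank (W : Submodule F V) (i : ℕ) :
    #(W.subspacesOfFinrank i) = Nat.card {D : Submodule F W // finrank F D = i} := by
  rw [subspacesOfFinrank, ← Set.ncard_eq_toFinset_card, ← Nat.card_coe_set_eq]
  refine Nat.card_congr (((MapSubtype.orderIso W).toEquiv.subtypeEquiv fun D => ?_).trans
    (Equiv.subtypeSubtypeEquivSubtypeInter _ _)).symm
  exact (finrank_map_subtype_eq W D).symm ▸ Iff.rfl

end Submodule

variable [Fintype F]

local notation "q" => Fintype.card F

theorem card_finrank_eq_mul_prod {i : ℕ} (hi : i ≤ finrank F V) :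
    Nat.card {D : Submodule F V // finrank F D = i} * ∏ j ∈ range i, (q ^ i - q ^ j) =
      ∏ j ∈ range i, (q ^ finrank F V - q ^ j) := by
  let span : {s : Fin i → V // LinearIndependent F s} → {D : Submodule F V // finrank F D = i} :=
    fun s => ⟨Submodule.span F (Set.range s.1), by rw [finrank_span_eq_card s.2, Fintype.card_fin]⟩
  have hfiber (D : {D : Submodule F V // finrank F D = i}) :
      Nat.card {s // span s = D} = ∏ j ∈ range i, (q ^ i - q ^ j) := by
    have hD := card_linearIndependent (K := F) (V := D.1) D.2.ge
    rw [D.2, Fin.prod_univ_eq_prod_range (fun j => q ^ i - q ^ j)] at hD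
    rw [← hD, ← Nat.card_congr (linearIndependentSpanEquiv D)]
    exact Nat.card_congr (Equiv.subtypeEquivRight fun s => Subtype.ext_iff)
  rw [← Nat.card_eq_card_mul_of_card_fiber_eq span hfiber, card_linearIndependent hi,
    Fin.prod_univ_eq_prod_range (fun j => q ^ finrank F V - q ^ j)]

namespace Submodule

theorem card_subspacesOfFinrank_mul_prod (W : Submodule F V) {i : ℕ} (hi : i ≤ finrank F W) :
    #(W.subspacesOfFinrank i) * ∏ j ∈ range i, (q ^ i - q ^ j) =
      ∏ j ∈ range i, (q ^ finrank F W - q ^ j) := by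
  rw [card_subspacesOfFinrank, card_finrank_eq_mul_prod hi]

theorem subspacesOfFinrank_nonempty (W : Submodule F V) {i : ℕ} (hi : i ≤ finrank F W) :
    (W.subspacesOfFinrank i).Nonempty := by
  have hprod : 0 < ∏ j ∈ range i, (q ^ finrank F W - q ^ j) :=
    prod_pos fun j hj => Nat.sub_pos_of_lt (Nat.pow_lt_pow_right Fintype.one_lt_card (by grind))
  rw [← W.card_subspacesOfFinrank_mul_prod hi] at hprod
  exact card_pos.mp (Nat.pos_of_mul_pos_right hprod)

theorem pow_finrank_sub_one_mul_card_subspacesOfFinrank {W H : Submodule F V}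
    (hH : finrank F H + 1 = finrank F W) {i : ℕ} (hi : i ≤ finrank F H) :
    (q ^ finrank F W - 1) * #(H.subspacesOfFinrank i) =
      (q ^ (finrank F W - i) - 1) * #(W.subspacesOfFinrank i) := by
  have hq : 1 < q := Fintype.one_lt_card
  obtain ⟨a, hm⟩ : ∃ a, finrank F H = i + a := ⟨finrank F H - i, by omega⟩
  rw [← hH, hm, show i + a + 1 - i = a + 1 by omega]
  have hW : (#(W.subspacesOfFinrank i) : ℤ) * ∏ j ∈ range i, ((q : ℤ) ^ i - (q : ℤ) ^ j) =
      ∏ j ∈ range i, ((q : ℤ) ^ (i + a + 1) - (q : ℤ) ^ j) := by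
    rw [← Nat.cast_prod_range_pow_sub_pow hq.le le_rfl,
      ← Nat.cast_prod_range_pow_sub_pow hq.le (by omega), ← hm, hH]
    exact_mod_cast W.card_subspacesOfFinrank_mul_prod (by omega)
  have hH' : (#(H.subspacesOfFinrank i) : ℤ) * ∏ j ∈ range i, ((q : ℤ) ^ i - (q : ℤ) ^ j) =
      ∏ j ∈ range i, ((q : ℤ) ^ (i + a) - (q : ℤ) ^ j) := by
    rw [← Nat.cast_prod_range_pow_sub_pow hq.le le_rfl,
      ← Nat.cast_prod_range_pow_sub_pow hq.le (by omega), ← hm]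
    exact_mod_cast H.card_subspacesOfFinrank_mul_prod hi
  set c := ∏ j ∈ range i, ((q : ℤ) ^ i - (q : ℤ) ^ j)
  have hc : c ≠ 0 := prod_ne_zero_iff.mpr fun j hj => sub_ne_zero.mpr
    (pow_right_strictMono₀ (by exact_mod_cast hq) (mem_range.mp hj)).ne'
  zify [Nat.one_le_pow (i + a + 1) q (by omega), Nat.one_le_pow (a + 1) q (by omega)]
  -- both counts are Gaussian binomials with denominator `c`; compare their numerators
  refine mul_left_cancel₀ hc ?_
  linear_combination mul_prod_range_pow_sub_pow (q : ℤ) i a +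
    ((q : ℤ) ^ (i + a + 1) - 1) * hH' - ((q : ℤ) ^ (a + 1) - 1) * hW

open Classical in
theorem card_subspacesOfFinrank_not_le_mul {W H : Submodule F V} (hHW : H ≤ W)
    (hH : finrank F H + 1 = finrank F W) {i : ℕ} (hi : i < finrank F W) :
    #{D ∈ W.subspacesOfFinrank i | ¬ D ≤ H} * (q ^ finrank F W - 1) =
      q ^ (finrank F W - i) * (q ^ i - 1) * #(W.subspacesOfFinrank i) := by
  have hsplit := card_filter_add_card_filter_not (s := W.subspacesOfFinrank i) (· ≤ H)
  have hle : {D ∈ W.subspacesOfFinrank i | D ≤ H} = H.subspacesOfFinrank i := by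
    ext D
    simp only [mem_filter, mem_subspacesOfFinrank]
    exact ⟨fun h => ⟨h.2, h.1.2⟩, fun h => ⟨⟨h.1.trans hHW, h.2⟩, h.1⟩⟩
  rw [hle] at hsplit
  have hcount := pow_finrank_sub_one_mul_card_subspacesOfFinrank hH (i := i) (by omega)
  have hpow : q ^ (finrank F W - i) * q ^ i = q ^ finrank F W := by
    rw [← pow_add, Nat.sub_add_cancel hi.le]
  have hq : 0 < q := Fintype.card_pos
  zify [Nat.one_le_pow (finrank F W) q hq, Nat.one_le_pow (finrank F W - i) q hq,
    Nat.one_le_pow i q hq] at hsplit hcount hpow ⊢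
  linear_combination ((q : ℤ) ^ finrank F W - 1) * hsplit - hcount -
    (#(W.subspacesOfFinrank i) : ℤ) * hpow

end Submodule

end Subspaces

section Codes

variable {F : Type*} [Field F] {n : ℕ}

theorem mem_codeSupp_iff_not_le_ker {D : Submodule F (Fin n → F)} {x : Fin n} :
    x ∈ codeSupp D ↔ ¬ D ≤ LinearMap.ker (LinearMap.proj x) := by
  simp [codeSupp, SetLike.le_def]

open Classical in
theorem codeWt_eq_card_filter (D : Submodule F (Fin n → F)) :
    codeWt D = #{x | x ∈ codeSupp D} := by
  simp [codeWt, Set.ncard_eq_toFinset_card']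

open Classical in
theorem sum_codeWt_eq_sum_card_filter (S : Finset (Submodule F (Fin n → F))) :
    ∑ D ∈ S, codeWt D = ∑ x, #{D ∈ S | x ∈ codeSupp D} := by
  simp_rw [codeWt_eq_card_filter]
  exact sum_card_bipartiteAbove_eq_sum_card_bipartiteBelow (fun D x => x ∈ codeSupp D)

theorem dGHW_finrank_le_codeWt {C D : Submodule F (Fin n → F)} (hDC : D ≤ C) :
    dGHW C (finrank F D) ≤ codeWt D :=
  Nat.sInf_le ⟨D, hDC, rfl, rfl⟩

theorem dGHW_finrank_self (C : Submodule F (Fin n → F)) : dGHW C (finrank F C) = codeWt C := by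
  refine le_antisymm (dGHW_finrank_le_codeWt le_rfl) (le_csInf ⟨_, C, le_rfl, rfl, rfl⟩ ?_)
  rintro _ ⟨D, hDC, hD, rfl⟩
  rw [Submodule.eq_of_le_of_finrank_eq hDC hD]

variable [Fintype F]

local notation "q" => Fintype.card F

theorem exists_mem_subspacesOfFinrank_codeWt_eq_dGHW {C : Submodule F (Fin n → F)} {i : ℕ}
    (hi : i ≤ finrank F C) : ∃ D ∈ C.subspacesOfFinrank i, codeWt D = dGHW C i := by
  obtain ⟨D, hD⟩ := C.subspacesOfFinrank_nonempty hi
  rw [Submodule.mem_subspacesOfFinrank] at hD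
  have hne : {m | ∃ E : Submodule F (Fin n → F), E ≤ C ∧ finrank F E = i ∧ codeWt E = m}.Nonempty :=
    ⟨codeWt D, D, hD.1, hD.2, rfl⟩
  obtain ⟨E, hEC, hE, hEw⟩ := Nat.sInf_mem hne
  exact ⟨E, Submodule.mem_subspacesOfFinrank.mpr ⟨hEC, hE⟩, hEw⟩

open Classical in
theorem card_filter_mem_codeSupp_mul {C : Submodule F (Fin n → F)} {i : ℕ}
    (hi : i < finrank F C) {x : Fin n} (hx : x ∈ codeSupp C) :
    #{D ∈ C.subspacesOfFinrank i | x ∈ codeSupp D} * (q ^ finrank F C - 1) =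
      q ^ (finrank F C - i) * (q ^ i - 1) * #(C.subspacesOfFinrank i) := by
  rw [mem_codeSupp_iff_not_le_ker] at hx
  rw [← Submodule.card_subspacesOfFinrank_not_le_mul inf_le_left
    (Submodule.finrank_inf_ker_add_one hx) hi]
  congr 2
  refine filter_congr fun D hD => ?_
  rw [Submodule.mem_subspacesOfFinrank] at hD
  rw [mem_codeSupp_iff_not_le_ker, le_inf_iff, and_iff_right hD.1]

open Classical in
theorem mul_sum_codeWt_subspacesOfFinrank {C : Submodule F (Fin n → F)} {i : ℕ}
    (hi : i < finrank F C) :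
    (q ^ finrank F C - 1) * ∑ D ∈ C.subspacesOfFinrank i, codeWt D =
      q ^ (finrank F C - i) * (q ^ i - 1) * #(C.subspacesOfFinrank i) * codeWt C := by
  have hcount (x : Fin n) : (q ^ finrank F C - 1) * #{D ∈ C.subspacesOfFinrank i | x ∈ codeSupp D} =
      if x ∈ codeSupp C then q ^ (finrank F C - i) * (q ^ i - 1) * #(C.subspacesOfFinrank i)
      else 0 := by
    split_ifs with hx
    · rw [mul_comm, card_filter_mem_codeSupp_mul hi hx]
    · refine mul_eq_zero_of_right _ (card_eq_zero.mpr (filter_eq_empty_iff.mpr fun D hD hxD => ?_))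
      obtain ⟨d, hd, hdx⟩ := hxD
      exact hx ⟨d, (Submodule.mem_subspacesOfFinrank.mp hD).1 hd, hdx⟩
  rw [sum_codeWt_eq_sum_card_filter, mul_sum, sum_congr rfl fun x _ => hcount x, ← sum_filter,
    sum_const, smul_eq_mul, ← codeWt_eq_card_filter, mul_comm]

end Codes

theorem dk_di_inequality_general
    {F : Type*} [Field F] [Fintype F] {n k q i : ℕ} (hq : Fintype.card F = q)
    (C : Submodule F (Fin n → F)) (hk : Module.finrank F C = k)
    (hik : i < k) :
    q ^ (k - i) * (q ^ i - 1) * dGHW C k ≥ (q ^ k - 1) * dGHW C i ∧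
    (q ^ (k - i) * (q ^ i - 1) * dGHW C k = (q ^ k - 1) * dGHW C i ↔
      ∀ D D' : Submodule F (Fin n → F), D ≤ C → D' ≤ C →
        Module.finrank F D = i → Module.finrank F D' = i → codeWt D = codeWt D') := by
  subst hq hk
  have hmin (D) (hD : D ∈ C.subspacesOfFinrank i) : dGHW C i ≤ codeWt D := by
    obtain ⟨hDC, rfl⟩ := Submodule.mem_subspacesOfFinrank.mp hD
    exact dGHW_finrank_le_codeWt hDC
  obtain ⟨D₀, hD₀, hD₀w⟩ := exists_mem_subspacesOfFinrank_codeWt_eq_dGHW hik.le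
  have hS : 0 < #(C.subspacesOfFinrank i) := card_pos.mpr ⟨D₀, hD₀⟩
  have hq : 0 < Fintype.card F ^ finrank F C - 1 :=
    Nat.sub_pos_of_lt (Nat.one_lt_pow (by omega) Fintype.one_lt_card)
  have hmean : Fintype.card F ^ (finrank F C - i) * (Fintype.card F ^ i - 1) * codeWt C *
      #(C.subspacesOfFinrank i) = (Fintype.card F ^ finrank F C - 1) *
        ∑ D ∈ C.subspacesOfFinrank i, codeWt D := by
    rw [mul_sum_codeWt_subspacesOfFinrank hik, mul_right_comm]
  -- scale both claims by the number of subcodes: they become `#S * d_i` versus `∑ codeWt`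
  rw [dGHW_finrank_self, ge_iff_le, ← Nat.mul_le_mul_right_iff hS, ← Nat.mul_right_cancel_iff hS,
    hmean, mul_assoc, mul_comm (dGHW C i), Nat.mul_le_mul_left_iff hq, Nat.mul_left_cancel_iff hq,
    sum_eq_card_mul_iff hmin]
  refine ⟨by simpa using card_nsmul_le_sum _ codeWt _ hmin, fun h D D' hDC hD'C hD hD' => ?_,
    fun h D hD => ?_⟩
  · rw [h D (Submodule.mem_subspacesOfFinrank.mpr ⟨hDC, hD⟩),
      h D' (Submodule.mem_subspacesOfFinrank.mpr ⟨hD'C, hD'⟩)]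
  · obtain ⟨hDC, hDi⟩ := Submodule.mem_subspacesOfFinrank.mp hD
    obtain ⟨hD₀C, hD₀i⟩ := Submodule.mem_subspacesOfFinrank.mp hD₀
    exact hD₀w ▸ h D D₀ hDC hD₀C hDi hD₀i

/-- `q^(k-i) * (q^i - 1) * d_k ≥ (q^k - 1) * d_i` for `1 ≤ i < k`, with equality if and
only if all `i`-dimensional subcodes of `C` have the same weight. -/
theorem dk_di_inequality
    {F : Type*} [Field F] [Fintype F] {n k q i : ℕ} (hq : Fintype.card F = q)
    (C : Submodule F (Fin n → F)) (hk : Module.finrank F C = k)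
    (hi1 : 1 ≤ i) (hik : i < k) :
    q ^ (k - i) * (q ^ i - 1) * dGHW C k ≥ (q ^ k - 1) * dGHW C i ∧
    (q ^ (k - i) * (q ^ i - 1) * dGHW C k = (q ^ k - 1) * dGHW C i ↔
      ∀ D D' : Submodule F (Fin n → F), D ≤ C → D' ≤ C →
        Module.finrank F D = i → Module.finrank F D' = i → codeWt D = codeWt D') :=
  dk_di_inequality_general hq C hk hik
end

section
/- Let C be an [n,k]_q linear code, let 0 ≤ i ≤ k, and let σ ⊆ {1,…,n} be minimal under inclusion with dim C(σ) = i (i.e. σ ∈ N_i). Then there exists an i-dimensional subcode C' of C such that σ = Supp(C'). -/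
/-- `C(σ)`: the subcode of `C` consisting of codewords whose support lies in `σ`. Its
dimension equals the nullity `|σ| - rank(σ)` of `σ` in the matroid of a parity check
matrix of `C`. -/
def codeOn {F : Type*} [Field F] {n : ℕ} (C : Submodule F (Fin n → F)) (σ : Set (Fin n)) :
    Submodule F (Fin n → F) where
  carrier := {c | c ∈ C ∧ ∀ x ∉ σ, c x = 0}
  add_mem' := by
    rintro a b ⟨ha, ha'⟩ ⟨hb, hb'⟩
    exact ⟨C.add_mem ha hb, fun x hx => by simp [ha' x hx, hb' x hx]⟩
  zero_mem' := ⟨C.zero_mem, fun x _ => rfl⟩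
  smul_mem' := by
    rintro r a ⟨ha, ha'⟩
    exact ⟨C.smul_mem r ha, fun x hx => by simp [ha' x hx]⟩

/-- If `σ` is minimal (under inclusion) with `dim C(σ) = i`, i.e. `σ ∈ N_i`, then `σ` is
the support of some `i`-dimensional subcode of `C`. -/
theorem Ni_elements_are_supports
    {F : Type*} [Field F] [Fintype F] {n k i : ℕ}
    (C : Submodule F (Fin n → F)) (hk : Module.finrank F C = k) (hik : i ≤ k)
    (σ : Set (Fin n))
    (hσ : Minimal (fun τ : Set (Fin n) => Module.finrank F (codeOn C τ) = i) σ) :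
    ∃ C' : Submodule F (Fin n → F), C' ≤ C ∧ Module.finrank F C' = i ∧
      codeSupp C' = σ := by
  refine ⟨codeOn C σ, fun c hc => hc.1, hσ.1, ?_⟩
  set τ := codeSupp (codeOn C σ) with hτ
  have hτσ : τ ⊆ σ := by
    rintro x ⟨d, hd, hdx⟩
    by_contra hx
    exact hdx (hd.2 x hx)
  have heq : codeOn C τ = codeOn C σ := by
    apply le_antisymm
    · exact fun c hc => ⟨hc.1, fun x hx => hc.2 x (fun h => hx (hτσ h))⟩
    · refine fun c hc => ⟨hc.1, fun x hx => ?_⟩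
      by_contra hcx
      exact hx ⟨c, hc, hcx⟩
  have : σ ⊆ τ := hσ.2 (show Module.finrank F (codeOn C τ) = i by rw [heq]; exact hσ.1) hτσ
  exact le_antisymm hτσ this
end

section
/- Let C be a constant weight [n,k]_q code of weight d and let 0 ≤ i ≤ k. Then every σ ∈ N_i has the same cardinality, namely |σ| = d_i, where q^{i−1}(q−1) · d_i = d · (q^i − 1). -/
/-- For a constant weight code of weight `d`, every `σ ∈ N_i` has the same cardinality,
namely `|σ| = d_i` where `q^(i-1) * (q-1) * d_i = d * (q^i - 1)`. -/
theorem Ni_elements_have_cardinality_di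
    {F : Type*} [Field F] [Fintype F] {n k q i d : ℕ} (hq : Fintype.card F = q)
    (C : Submodule F (Fin n → F)) (hk : Module.finrank F C = k) (hik : i ≤ k)
    (hconst : ∀ c ∈ C, c ≠ 0 → ({x | c x ≠ 0} : Set (Fin n)).ncard = d)
    (σ : Set (Fin n))
    (hσ : Minimal (fun τ : Set (Fin n) => Module.finrank F (codeOn C τ) = i) σ) :
    q ^ (i - 1) * (q - 1) * σ.ncard = d * (q ^ i - 1) := by
  classical
  subst hq
  set q := Fintype.card F with hq
  set D := codeOn C σ with hDdef
  have hD_i : Module.finrank F D = i := hσ.1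
  haveI : Fintype D := Fintype.ofFinite D
  have hcardD : Fintype.card D = q ^ i := by
    rw [Module.card_eq_pow_finrank (K := F) (V := D), hD_i]
  -- every point of σ is in the support of D
  have hsupp : ∀ x ∈ σ, ∃ c ∈ D, c x ≠ 0 := by
    intro x hx
    by_contra h
    push_neg at h
    have heq : codeOn C (σ \ {x}) = codeOn C σ := by
      apply le_antisymm
      · rintro c ⟨hc, hc'⟩
        refine ⟨hc, fun y hy => hc' y ?_⟩
        exact fun hy' => hy hy'.1
      · rintro c ⟨hc, hc'⟩
        refine ⟨hc, fun y hy => ?_⟩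
        by_cases hyx : y = x
        · subst hyx; exact h c ⟨hc, hc'⟩
        · exact hc' y (fun hy' => hy ⟨hy', hyx⟩)
    have hle : σ ⊆ σ \ {x} := hσ.2 (by show Module.finrank F (codeOn C (σ \ {x})) = i; rw [heq]; exact hD_i) Set.diff_subset
    exact (hle hx).2 rfl
  -- double counting
  have key : ∑ c : D, (Finset.univ.filter fun x : Fin n => (c : Fin n → F) x ≠ 0).card
      = ∑ x : Fin n, (Finset.univ.filter fun c : D => (c : Fin n → F) x ≠ 0).card := by
    simp only [Finset.card_filter]
    exact Finset.sum_comm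
  -- LHS
  have hL : ∑ c : D, (Finset.univ.filter fun x : Fin n => (c : Fin n → F) x ≠ 0).card
      = (q ^ i - 1) * d := by
    have h0 : (0 : D) ∈ (Finset.univ : Finset D) := Finset.mem_univ _
    rw [← Finset.sum_erase_add _ _ h0]
    have : ∀ c ∈ Finset.univ.erase (0 : D),
        (Finset.univ.filter fun x : Fin n => (c : Fin n → F) x ≠ 0).card = d := by
      intro c hc
      have hc0 : (c : Fin n → F) ≠ 0 :=
        fun h' => (Finset.mem_erase.mp hc).1 (Subtype.ext h')
      have := hconst c c.2.1 hc0
      rwa [Set.ncard_eq_toFinset_card', Set.toFinset_setOf] at this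
    rw [Finset.sum_congr rfl this, Finset.sum_const, Finset.card_erase_of_mem h0,
      Finset.card_univ, hcardD]
    simp [Nat.mul_comm]
  -- RHS
  have hR : ∑ x : Fin n, (Finset.univ.filter fun c : D => (c : Fin n → F) x ≠ 0).card
      = σ.ncard * (q ^ (i - 1) * (q - 1)) := by
    have hz : ∀ x ∈ (Finset.univ : Finset (Fin n)), x ∉ σ.toFinset →
        (Finset.univ.filter fun c : D => (c : Fin n → F) x ≠ 0).card = 0 := by
      intro x _ hx
      rw [Finset.card_eq_zero, Finset.filter_eq_empty_iff]
      intro c _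
      simp only [ne_eq, not_not]
      exact c.2.2 x (by simpa using hx)
    rw [← Finset.sum_subset (Finset.subset_univ σ.toFinset) hz]
    have hval : ∀ x ∈ σ.toFinset,
        (Finset.univ.filter fun c : D => (c : Fin n → F) x ≠ 0).card
          = q ^ (i - 1) * (q - 1) := by
      intro x hx
      have hxσ : x ∈ σ := by simpa using hx
      obtain ⟨c₀, hc₀D, hc₀x⟩ := hsupp x hxσ
      -- evaluation map
      let φ : D →ₗ[F] F := (LinearMap.proj x).comp D.subtype
      have hsurj : Function.Surjective φ := by
        intro a
        refine ⟨(a * ((c₀ : Fin n → F) x)⁻¹) • ⟨c₀, hc₀D⟩, ?_⟩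
        show (a * ((c₀ : Fin n → F) x)⁻¹) * (c₀ : Fin n → F) x = a
        field_simp
      have hker : Module.finrank F (LinearMap.ker φ) = i - 1 ∧ 1 ≤ i := by
        have h1 : Module.finrank F (LinearMap.range φ) = 1 := by
          rw [LinearMap.range_eq_top.mpr hsurj, finrank_top, Module.finrank_self]
        have h2 := LinearMap.finrank_range_add_finrank_ker φ
        rw [h1, hD_i] at h2
        omega
      haveI : Fintype (LinearMap.ker φ) := Fintype.ofFinite _
      have hkercard : Fintype.card (LinearMap.ker φ) = q ^ (i - 1) := by
        rw [Module.card_eq_pow_finrank (K := F) (V := LinearMap.ker φ), hker.1]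
      have hsplit := Finset.card_filter_add_card_filter_not
        (s := (Finset.univ : Finset D)) (p := fun c : D => (c : Fin n → F) x ≠ 0)
      have hnot : (Finset.univ.filter fun c : D => ¬ (c : Fin n → F) x ≠ 0).card
          = q ^ (i - 1) := by
        rw [← hkercard]
        rw [← Fintype.card_subtype]
        apply Fintype.card_congr
        apply Equiv.subtypeEquivRight
        intro c
        simp [φ, LinearMap.mem_ker]
      rw [Finset.card_univ, hcardD, hnot] at hsplit
      have hqi : q ^ (i - 1) * q = q ^ i := by
        rw [← pow_succ]
        congr 1
        omega
      have : q ^ (i-1) * (q - 1) = q ^ i - q ^ (i-1) := by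
        rw [Nat.mul_sub, hqi, Nat.mul_one]
      omega
    rw [Finset.sum_congr rfl hval, Finset.sum_const, smul_eq_mul]
    congr 1
    rw [Set.ncard_eq_toFinset_card']
  rw [key, hR] at hL
  rw [mul_comm (q ^ (i-1) * (q-1)) σ.ncard, mul_comm d]
  exact hL
end

section
/- Let C be a constant weight [n,k]_q code. Then the map sending each subcode C' of C to its support Supp(C') ⊆ {1,…,n} is injective: if two subcodes of C have the same support, they are equal. -/
/-!
Fix a subcode `D` of a code whose nonzero codewords all have weight `d`. A coordinate in
`Supp D` is a nonzero linear functional on `D`, so it is nonzero on exactly `(q - 1)|D| / q`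
codewords. Counting the nonzero entries of the codewords of `D` by columns and by rows gives
`(q - 1)|D| |Supp D| = q (|D| - 1) d`, so for `d > 0` the support of `D` determines `|D|`.
If `D₁` and `D₂` have the same support, so does `D₁ ⊔ D₂`; hence it has the size of `D₁` and
of `D₂`, and contains both, so all three are equal.
-/

open Finset

section

open scoped Classical

variable {F : Type*} [Field F] {n : ℕ}

def Submodule.IsConstantWeight (C : Submodule F (Fin n → F)) (d : ℕ) : Prop :=
  ∀ c ∈ C, c ≠ 0 → hammingNorm c = d

theorem Submodule.IsConstantWeight.mono {C D : Submodule F (Fin n → F)} {d : ℕ}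
    (hC : C.IsConstantWeight d) (hDC : D ≤ C) : D.IsConstantWeight d :=
  fun c hc => hC c (hDC hc)

theorem codeSupp_sup (D₁ D₂ : Submodule F (Fin n → F)) :
    codeSupp (D₁ ⊔ D₂) = codeSupp D₁ ∪ codeSupp D₂ := by
  ext x
  constructor
  · rintro ⟨e, he, hex⟩
    obtain ⟨a, ha, b, hb, rfl⟩ := Submodule.mem_sup.mp he
    by_cases hax : a x = 0
    · exact Or.inr ⟨b, hb, by simpa [hax] using hex⟩
    · exact Or.inl ⟨a, ha, hax⟩
  · rintro (⟨c, hc, hcx⟩ | ⟨c, hc, hcx⟩)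
    · exact ⟨c, Submodule.mem_sup_left hc, hcx⟩
    · exact ⟨c, Submodule.mem_sup_right hc, hcx⟩

theorem ncard_setOf_apply_ne_zero (c : Fin n → F) :
    ({x | c x ≠ 0} : Set (Fin n)).ncard = hammingNorm c := by
  rw [hammingNorm, ← Set.ncard_coe_finset, coe_filter]
  simp only [mem_univ, true_and]

variable [Fintype F]

theorem LinearMap.card_mul_card_filter_ne_zero {M : Type*} [AddCommGroup M] [Module F M]
    [Fintype M] {f : M →ₗ[F] F} (hf : f ≠ 0) :
    Fintype.card F * #{m | f m ≠ 0} = (Fintype.card F - 1) * Fintype.card M := by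
  have hker : Nat.card (ker f) * Fintype.card F = Fintype.card M := by
    rw [← Nat.card_eq_fintype_card, ← Nat.card_eq_fintype_card,
      Submodule.card_eq_card_quotient_mul_card (ker f),
      Nat.card_congr (f.quotKerEquivOfSurjective (LinearMap.surjective hf)).toEquiv]
  have hzero : #{m | f m = 0} = Nat.card (ker f) := by
    rw [Nat.card_eq_fintype_card, ← Fintype.card_subtype]
    rfl
  rw [filter_not, card_sdiff_of_subset (filter_subset _ _), hzero, card_univ, Nat.mul_sub,
    Nat.sub_one_mul, mul_comm _ (Nat.card _), hker]

theorem card_mul_card_filter_apply_ne_zero (D : Submodule F (Fin n → F)) {x : Fin n}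
    (hx : x ∈ codeSupp D) :
    Fintype.card F * #{c : D | (c : Fin n → F) x ≠ 0}
      = (Fintype.card F - 1) * Fintype.card D := by
  obtain ⟨c, hc, hcx⟩ := hx
  refine LinearMap.card_mul_card_filter_ne_zero (f := (LinearMap.proj x).comp D.subtype) ?_
  exact fun h => hcx (LinearMap.congr_fun h ⟨c, hc⟩)

theorem card_filter_apply_ne_zero_of_notMem (D : Submodule F (Fin n → F)) {x : Fin n}
    (hx : x ∉ codeSupp D) : #{c : D | (c : Fin n → F) x ≠ 0} = 0 := by
  rw [card_eq_zero, filter_eq_empty_iff]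
  exact fun c _ hcx => hx ⟨c, c.2, hcx⟩

theorem card_mul_sum_hammingNorm (D : Submodule F (Fin n → F)) :
    Fintype.card F * ∑ c : D, hammingNorm (c : Fin n → F)
      = (Fintype.card F - 1) * Fintype.card D * (codeSupp D).ncard := by
  have hswap : ∑ c : D, hammingNorm (c : Fin n → F)
      = ∑ x, #{c : D | (c : Fin n → F) x ≠ 0} := by
    simp only [hammingNorm, card_filter]
    exact sum_comm
  have hout : ∀ x ∈ univ, x ∉ (codeSupp D).toFinset →
      Fintype.card F * #{c : D | (c : Fin n → F) x ≠ 0} = 0 := fun x _ hx => by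
    rw [card_filter_apply_ne_zero_of_notMem D (Set.mem_toFinset.not.mp hx), mul_zero]
  rw [hswap, mul_sum, ← sum_subset (subset_univ _) hout,
    sum_congr rfl fun x hx => card_mul_card_filter_apply_ne_zero D (Set.mem_toFinset.mp hx),
    sum_const, smul_eq_mul, Set.ncard_eq_toFinset_card', mul_comm]

theorem Submodule.IsConstantWeight.sum_hammingNorm {D : Submodule F (Fin n → F)} {d : ℕ}
    (hD : D.IsConstantWeight d) :
    ∑ c : D, hammingNorm (c : Fin n → F) = (Fintype.card D - 1) * d := by
  rw [← sum_erase_add _ _ (mem_univ 0), Submodule.coe_zero, hammingNorm_zero, add_zero,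
    sum_congr rfl fun (c : D) hc => hD c c.2 (D.coe_eq_zero.not.mpr (ne_of_mem_erase hc)),
    sum_const, card_erase_of_mem (mem_univ _), card_univ, smul_eq_mul]

theorem Submodule.IsConstantWeight.card_mul_ncard_codeSupp {D : Submodule F (Fin n → F)} {d : ℕ}
    (hD : D.IsConstantWeight d) :
    (Fintype.card F - 1) * Fintype.card D * (codeSupp D).ncard
      = Fintype.card F * (Fintype.card D - 1) * d := by
  rw [← card_mul_sum_hammingNorm, hD.sum_hammingNorm, mul_assoc]

theorem Submodule.IsConstantWeight.card_eq_of_codeSupp_eq {D E : Submodule F (Fin n → F)}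
    {d : ℕ} (hd : 0 < d) (hD : D.IsConstantWeight d) (hE : E.IsConstantWeight d)
    (hsupp : codeSupp D = codeSupp E) : Fintype.card D = Fintype.card E := by
  obtain ⟨a, ha⟩ : ∃ a, Fintype.card D = a + 1 := Nat.exists_eq_add_one.mpr Fintype.card_pos
  obtain ⟨b, hb⟩ : ∃ b, Fintype.card E = b + 1 := Nat.exists_eq_add_one.mpr Fintype.card_pos
  have hDcount := hD.card_mul_ncard_codeSupp
  have hEcount := hE.card_mul_ncard_codeSupp
  rw [hsupp, ha, Nat.add_sub_cancel] at hDcount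
  rw [hb, Nat.add_sub_cancel] at hEcount
  have hab : Fintype.card F * d * (a * (b + 1)) = Fintype.card F * d * (b * (a + 1)) :=
    calc _ = Fintype.card F * a * d * (b + 1) := by ring
      _ = (Fintype.card F - 1) * (a + 1) * (codeSupp E).ncard * (b + 1) := by rw [hDcount]
      _ = (Fintype.card F - 1) * (b + 1) * (codeSupp E).ncard * (a + 1) := by ring
      _ = _ := by rw [hEcount]; ring
  have := Nat.eq_of_mul_eq_mul_left (Nat.mul_pos Fintype.card_pos hd) hab
  rw [ha, hb]
  linarith

theorem Submodule.IsConstantWeight.eq_of_le_of_codeSupp_eq {D E : Submodule F (Fin n → F)}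
    {d : ℕ} (hE : E.IsConstantWeight d) (hDE : D ≤ E) (hsupp : codeSupp D = codeSupp E) :
    D = E := by
  rcases Nat.eq_zero_or_pos d with rfl | hd
  · have hE_bot : E = ⊥ := (Submodule.eq_bot_iff E).mpr fun c hc =>
      by_contra fun h => h (hammingNorm_eq_zero.mp (hE c hc h))
    rw [hE_bot] at hDE ⊢
    exact le_bot_iff.mp hDE
  have hcard := (hE.mono hDE).card_eq_of_codeSupp_eq hd hE hsupp
  refine SetLike.coe_injective <| (Set.toFinite _).eq_of_subset_of_card_le hDE ?_
  change Nat.card E ≤ Nat.card D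
  rw [Nat.card_eq_fintype_card, Nat.card_eq_fintype_card, hcard]

end

theorem subcode_supp_injective_general
    {F : Type*} [Field F] [Fintype F] {n d : ℕ}
    (C : Submodule F (Fin n → F))
    (hconst : ∀ c ∈ C, c ≠ 0 → ({x | c x ≠ 0} : Set (Fin n)).ncard = d)
    (D₁ D₂ : Submodule F (Fin n → F)) (hD₁ : D₁ ≤ C) (hD₂ : D₂ ≤ C)
    (hsupp : codeSupp D₁ = codeSupp D₂) :
    D₁ = D₂ := by
  have hC : C.IsConstantWeight d := fun c hc h0 => by
    rw [← ncard_setOf_apply_ne_zero, hconst c hc h0]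
  have hsupp_sup : codeSupp (D₁ ⊔ D₂) = codeSupp D₂ := by
    rw [codeSupp_sup, hsupp, Set.union_self]
  have hC_sup : (D₁ ⊔ D₂).IsConstantWeight d := hC.mono (sup_le hD₁ hD₂)
  calc D₁ = D₁ ⊔ D₂ :=
        hC_sup.eq_of_le_of_codeSupp_eq le_sup_left (hsupp.trans hsupp_sup.symm)
    _ = D₂ := (hC_sup.eq_of_le_of_codeSupp_eq le_sup_right hsupp_sup.symm).symm

/-- For a constant weight code `C`, the map sending a subcode of `C` to its support is
injective: two subcodes of `C` with the same support are equal. -/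
theorem subcode_supp_injective
    {F : Type*} [Field F] [Fintype F] {n k d : ℕ}
    (C : Submodule F (Fin n → F)) (hk : Module.finrank F C = k)
    (hconst : ∀ c ∈ C, c ≠ 0 → ({x | c x ≠ 0} : Set (Fin n)).ncard = d)
    (D₁ D₂ : Submodule F (Fin n → F)) (hD₁ : D₁ ≤ C) (hD₂ : D₂ ≤ C)
    (hsupp : codeSupp D₁ = codeSupp D₂) :
    D₁ = D₂ :=
  subcode_supp_injective_general C hconst D₁ D₂ hD₁ hD₂ hsupp
end

section
/- Let C be a constant weight [n,k]_q code, let C' be a subcode of C, and let τ ⊆ Supp(C'). Then {c ∈ C : Supp(c) ⊆ τ} = {c ∈ C' : Supp(c) ⊆ τ}; equivalently, the restriction to τ of the matroid associated to C coincides with the restriction to τ of the matroid associated to C'. -/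
open Finset

section Aux

variable {F : Type*} [Field F] [Fintype F] {n d : ℕ}

/-- Double counting identity for a constant weight code. -/
lemma count_key (D : Submodule F (Fin n → F))
    (hwt : ∀ v ∈ D, v ≠ 0 → ({x | v x ≠ 0} : Set (Fin n)).ncard = d) :
    Fintype.card F * ((Nat.card D - 1) * d)
      = (codeSupp D).ncard * ((Fintype.card F - 1) * Nat.card D) := by
  classical
  haveI : Fintype D := Fintype.ofFinite D
  set q := Fintype.card F with hq
  set N := Nat.card D with hN
  have hNF : N = Fintype.card D := Nat.card_eq_fintype_card
  set T : ℕ := ∑ v : D, (Finset.univ.filter (fun x : Fin n => (v : Fin n → F) x ≠ 0)).card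
    with hT
  have hT1 : T = (N - 1) * d := by
    have h : T = ∑ v ∈ (Finset.univ : Finset D).erase 0, d := by
      rw [hT, ← Finset.sum_erase (f := fun v : D =>
        (Finset.univ.filter (fun x : Fin n => (v : Fin n → F) x ≠ 0)).card)]
      · refine Finset.sum_congr rfl fun v hv => ?_
        have hv0 : (v : Fin n → F) ≠ 0 := by
          intro h
          exact (Finset.mem_erase.mp hv).1 (by ext x; exact congrFun h x)
        have hw := hwt v v.2 hv0
        rw [← hw, Set.ncard_eq_toFinset_card']
        congr 1
        ext x; simp
      · simp
    rw [h, Finset.sum_const, smul_eq_mul, Finset.card_erase_of_mem (by simp),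
      Finset.card_univ, hNF]
  set m : Fin n → ℕ := fun x => (Finset.univ.filter (fun v : D => (v : Fin n → F) x ≠ 0)).card
    with hm
  have hT2 : T = ∑ x : Fin n, m x := by
    simp only [hT, hm, Finset.card_filter]
    exact Finset.sum_comm
  have hmx : ∀ x ∈ codeSupp D, q * m x = (q - 1) * N := by
    intro x hx
    obtain ⟨w, hwD, hwx⟩ := hx
    set φ : D →ₗ[F] F := (LinearMap.proj x).comp D.subtype with hφ
    have hsurj : Function.Surjective φ := by
      intro a
      refine ⟨(a * (w x)⁻¹) • ⟨w, hwD⟩, ?_⟩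
      simp only [hφ, LinearMap.comp_apply, Submodule.coe_subtype, LinearMap.proj_apply,
        SetLike.val_smul, Pi.smul_apply, smul_eq_mul]
      field_simp
    have hquot : Nat.card (D ⧸ LinearMap.ker φ) = q := by
      have e1 : (D ⧸ LinearMap.ker φ) ≃ₗ[F] LinearMap.range φ :=
        φ.quotKerEquivRange
      have e2 : LinearMap.range φ = ⊤ := LinearMap.range_eq_top.mpr hsurj
      rw [Nat.card_congr e1.toEquiv, e2, Nat.card_congr Submodule.topEquiv.toEquiv,
        Nat.card_eq_fintype_card]
    have hker : N = Nat.card (LinearMap.ker φ) * q := by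
      rw [hN, Submodule.card_eq_card_quotient_mul_card (LinearMap.ker φ), hquot]
    have hmval : m x + Nat.card (LinearMap.ker φ) = N := by
      have hcnt : Nat.card (LinearMap.ker φ)
          = (Finset.univ.filter (fun v : D => ¬ ((v : Fin n → F) x ≠ 0))).card := by
        rw [← Fintype.card_subtype, ← Nat.card_eq_fintype_card]
        refine Nat.card_congr (Equiv.subtypeEquivRight ?_)
        intro v
        simp [hφ, LinearMap.mem_ker]
      rw [hm, hcnt, Finset.card_filter_add_card_filter_not, Finset.card_univ, hNF]
    set kc := Nat.card (LinearMap.ker φ) with hkc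
    have h2 : q * kc = N := by rw [mul_comm]; exact hker.symm
    calc q * m x = q * N - q * kc := by rw [show m x = N - kc from by omega, Nat.mul_sub]
      _ = q * N - N := by rw [h2]
      _ = (q - 1) * N := by rw [Nat.sub_mul, one_mul]
  have hmx0 : ∀ x : Fin n, x ∉ codeSupp D → m x = 0 := by
    intro x hx
    rw [hm, Finset.card_eq_zero, Finset.filter_eq_empty_iff]
    intro v _
    simp only [ne_eq, not_not]
    by_contra h
    exact hx ⟨v, v.2, h⟩
  have hfin : (codeSupp D).Finite := Set.toFinite _
  have hsum : ∑ x : Fin n, m x = ∑ x ∈ hfin.toFinset, m x := by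
    exact (Finset.sum_subset (Finset.subset_univ _)
      (fun x _ hx => hmx0 x (by simp only [Set.Finite.mem_toFinset] at hx; exact hx))).symm
  calc q * ((N - 1) * d) = q * T := by rw [hT1]
    _ = ∑ x ∈ hfin.toFinset, q * m x := by rw [hT2, hsum, Finset.mul_sum]
    _ = ∑ x ∈ hfin.toFinset, (q - 1) * N := by
        refine Finset.sum_congr rfl fun x hx => hmx x (by simpa using hx)
    _ = (codeSupp D).ncard * ((q - 1) * N) := by
        rw [Finset.sum_const, smul_eq_mul, Set.ncard_eq_toFinset_card _ hfin]

end Aux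

/-- For a constant weight code `C`, a subcode `C'` of `C` and `τ ⊆ Supp(C')`, the codewords
of `C` supported in `τ` are exactly the codewords of `C'` supported in `τ`; this expresses
that the restrictions to `τ` of the matroids associated to `C` and `C'` coincide. -/
theorem restriction_matroids_coincide
    {F : Type*} [Field F] [Fintype F] {n k d : ℕ}
    (C : Submodule F (Fin n → F)) (hk : Module.finrank F C = k)
    (hconst : ∀ c ∈ C, c ≠ 0 → ({x | c x ≠ 0} : Set (Fin n)).ncard = d)
    (C' : Submodule F (Fin n → F)) (hC' : C' ≤ C)
    (τ : Set (Fin n)) (hτ : τ ⊆ codeSupp C') :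
    {c : Fin n → F | c ∈ C ∧ {x | c x ≠ 0} ⊆ τ} =
      {c : Fin n → F | c ∈ C' ∧ {x | c x ≠ 0} ⊆ τ} := by
  classical
  ext c
  simp only [Set.mem_setOf_eq]
  constructor
  · rintro ⟨hcC, hsupp⟩
    refine ⟨?_, hsupp⟩
    by_contra hcC'
    have hc0 : c ≠ 0 := by rintro rfl; exact hcC' C'.zero_mem
    set D : Submodule F (Fin n → F) := C' ⊔ (F ∙ c) with hD
    have hDC : D ≤ C := sup_le hC' ((Submodule.span_singleton_le_iff_mem c C).mpr hcC)
    have hsuppD : codeSupp D = codeSupp C' := by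
      apply le_antisymm
      · rintro x ⟨v, hvD, hvx⟩
        rw [hD, Submodule.mem_sup] at hvD
        obtain ⟨y, hy, z, hz, rfl⟩ := hvD
        obtain ⟨a, rfl⟩ := Submodule.mem_span_singleton.mp hz
        by_cases hyx : y x ≠ 0
        · exact ⟨y, hy, hyx⟩
        · push_neg at hyx
          have hcx : c x ≠ 0 := by
            intro h; apply hvx; simp [hyx, h]
          exact hτ (hsupp hcx)
      · rintro x ⟨v, hv, hvx⟩
        exact ⟨v, le_sup_left (a := C') hv, hvx⟩
    haveI : Fintype D := Fintype.ofFinite D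
    haveI : Fintype C' := Fintype.ofFinite C'
    have hcard : Nat.card D = Fintype.card F * Nat.card C' := by
      rw [Nat.card_eq_fintype_card, Nat.card_eq_fintype_card,
        Module.card_eq_pow_finrank (K := F) (V := D), Module.card_eq_pow_finrank (K := F) (V := C')]
      have h1 : Module.finrank F D = Module.finrank F C' + 1 := by
        have hh := Submodule.finrank_sup_add_finrank_inf_eq C' (F ∙ c)
        have hinf : C' ⊓ (F ∙ c) = ⊥ := by
          rw [eq_bot_iff]
          rintro v ⟨hv1, hv2⟩
          obtain ⟨a, rfl⟩ := Submodule.mem_span_singleton.mp hv2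
          rcases eq_or_ne a 0 with rfl | ha
          · simp
          · exact absurd (by simpa [ha] using C'.smul_mem a⁻¹ hv1) hcC'
        rw [hinf, finrank_span_singleton hc0, ← hD] at hh
        simpa using hh
      rw [h1, pow_succ]
      ring
    have key1 := count_key (d := d) C' (fun v hv hv0 => hconst v (hC' hv) hv0)
    have key2 := count_key (d := d) D (fun v hv hv0 => hconst v (hDC hv) hv0)
    rw [hsuppD, hcard] at key2
    set q := Fintype.card F with hq
    set N := Nat.card C' with hN
    set S := (codeSupp C').ncard with hS
    have hq2 : 2 ≤ q := Fintype.one_lt_card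
    have hN1 : 1 ≤ N := Nat.card_pos
    have hd1 : 1 ≤ d := by
      obtain ⟨x, hx⟩ : ∃ x, c x ≠ 0 := by
        by_contra h
        push_neg at h
        exact hc0 (funext h)
      have := hconst c hcC hc0
      have hpos : 0 < ({x | c x ≠ 0} : Set (Fin n)).ncard :=
        (Set.ncard_pos (Set.toFinite _)).mpr ⟨x, hx⟩
      omega
    -- derive contradiction
    have e1 : q * ((q * N - 1) * d) = q * (q * ((N - 1) * d)) := by
      rw [key2, key1]; ring
    have e2 : (q * N - 1) * d = q * ((N - 1) * d) :=
      Nat.eq_of_mul_eq_mul_left (by omega) e1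
    have e3 : q * N - 1 = q * (N - 1) := by
      have : (q * N - 1) * d = (q * (N - 1)) * d := by rw [e2]; ring
      exact Nat.eq_of_mul_eq_mul_right (by omega) this
    have e4 : q * (N - 1) = q * N - q := by
      rw [Nat.mul_sub, mul_one]
    have hle : q ≤ q * N := Nat.le_mul_of_pos_right q hN1
    omega
  · rintro ⟨hcC', hsupp⟩
    exact ⟨hC' hcC', hsupp⟩
end

section
/- Let C be an [n,k]_q linear code with k ≥ 1. Suppose the set M of minimal elements (under inclusion) of {Supp(c) : c ∈ C, c ≠ 0} satisfies: every σ ∈ M has cardinality d, and |M| = (q^k − 1)/(q − 1). Then C is a constant weight code of weight d. -/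
/-- If the set `M` of minimal supports of nonzero codewords of a `k`-dimensional code `C`
(the circuits of the associated matroid) consists of sets of cardinality `d` and has
`(q^k - 1)/(q - 1)` elements (the number of `1`-dimensional subspaces of `C`), then `C` is
a constant weight code of weight `d`. -/
theorem constant_weight_of_circuits
    {F : Type*} [Field F] [Fintype F] {n k q d : ℕ} (hq : Fintype.card F = q)
    (C : Submodule F (Fin n → F)) (hk : Module.finrank F C = k) (hk1 : 1 ≤ k)
    (M : Set (Set (Fin n)))
    (hM : M = {σ | Minimal (fun τ : Set (Fin n) =>
      ∃ c ∈ C, c ≠ 0 ∧ {x | c x ≠ 0} = τ) σ})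
    (hcardM : ∀ σ ∈ M, σ.ncard = d)
    (hnumM : M.ncard = (q ^ k - 1) / (q - 1)) :
    ∀ c ∈ C, c ≠ 0 → ({x | c x ≠ 0} : Set (Fin n)).ncard = d := by
  classical
  have hq2 : 2 ≤ q := hq ▸ Fintype.one_lt_card
  -- choose a codeword for each minimal support
  have hPmem : ∀ σ ∈ M, ∃ w : Fin n → F, w ∈ C ∧ w ≠ 0 ∧ {x | w x ≠ 0} = σ := by
    intro σ hσ
    rw [hM] at hσ
    simp only [Set.mem_setOf_eq] at hσ
    obtain ⟨w, hwC, hw0, hs⟩ := hσ.prop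
    exact ⟨w, hwC, hw0, hs⟩
  choose! v hvC hv0 hvs using hPmem
  have hsupp_smul : ∀ (a : F), a ≠ 0 → ∀ w : Fin n → F,
      {x | (a • w) x ≠ 0} = {x | w x ≠ 0} := by
    intro a ha w; ext x; simp [ha]
  -- the map
  let ψ : (↥M × {a : F // a ≠ 0}) → {w : ↥C // w ≠ 0} := fun p =>
    ⟨⟨p.2.1 • v p.1.1, C.smul_mem _ (hvC _ p.1.2)⟩, by
      simp only [ne_eq, Submodule.mk_eq_zero]
      exact smul_ne_zero p.2.2 (hv0 _ p.1.2)⟩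
  have hinj : Function.Injective ψ := by
    rintro ⟨⟨σ, hσ⟩, ⟨a, ha⟩⟩ ⟨⟨τ, hτ⟩, ⟨b, hb⟩⟩ h
    have h' : a • v σ = b • v τ := by
      simpa [ψ, Subtype.ext_iff] using h
    have hst : σ = τ := by
      have h2 := congrArg (fun w => {x | w x ≠ 0}) h'
      simp only [hsupp_smul a ha, hsupp_smul b hb] at h2
      rwa [hvs σ hσ, hvs τ hτ] at h2
    subst hst
    have hab : a = b := by
      have h3 : (a - b) • v σ = 0 := by rw [sub_smul, h', sub_self]
      rcases smul_eq_zero.mp h3 with h4 | h4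
      · exact sub_eq_zero.mp h4
      · exact absurd h4 (hv0 σ hσ)
    simp [hab]
  -- cardinalities
  haveI : Fintype ↥C := Fintype.ofFinite _
  have hcardC : Fintype.card ↥C = q ^ k := by
    rw [Module.card_eq_pow_finrank (K := F) (V := ↥C), hq, hk]
  have hcard1 : Nat.card (↥M × {a : F // a ≠ 0}) = Nat.card {w : ↥C // w ≠ 0} := by
    have hdvd : q - 1 ∣ q ^ k - 1 := by
      simpa only [one_pow] using Nat.sub_dvd_pow_sub_pow q 1 k
    have e1 : Fintype.card {a : F // a ≠ 0} = q - 1 := by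
      simp only [ne_eq, Fintype.card_subtype_compl, Fintype.card_subtype_eq, hq]
    have e2 : Fintype.card {w : ↥C // w ≠ 0} = q ^ k - 1 := by
      simp only [ne_eq, Fintype.card_subtype_compl, Fintype.card_subtype_eq, hcardC]
    rw [Nat.card_prod, Nat.card_coe_set_eq, hnumM,
      Nat.card_eq_fintype_card, Nat.card_eq_fintype_card,
      e1, e2, Nat.div_mul_cancel hdvd]
  have hbij : Function.Bijective ψ :=
    (Nat.bijective_iff_injective_and_card ψ).mpr ⟨hinj, hcard1⟩
  -- conclusion
  intro c hcC hc0
  obtain ⟨⟨⟨σ, hσ⟩, ⟨a, ha⟩⟩, hψ⟩ := hbij.surjective ⟨⟨c, hcC⟩, by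
    simpa [Subtype.ext_iff] using hc0⟩
  have hc : a • v σ = c := by
    simpa [ψ, Subtype.ext_iff] using hψ
  have : {x | c x ≠ 0} = σ := by
    rw [← hc, hsupp_smul a ha, hvs σ hσ]
  rw [this]
  exact hcardM σ hσ
end
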